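/- arXiv:1608.00917 — 6 statements merged into one kernel-verified Lean document; each statement's English description precedes it below -/
import Mathlib

section
/- Suppose A_k ∈ 𝒜_O for every k ≥ 0, the output matrices and noise covariances satisfy the standing assumptions, and Γ_{0|0} is symmetric positive definite. Then for every k with 0 ≤ k < max{1, n−2}, the Kalman covariance recursion satisfies 0 < c̃_1(Γ_{0|0})·I ≤ Γ_{k|k}^{−1} ≤ c̃_2(Γ_{0|0})·I, where c̃_1(M) = (2(2n−5)·‖M‖ + (2(n−3)²−1)·q_2)^{−1} if n ≥ 4 and c̃_1(M) = ‖M‖^{−1} if 2 ≤ n < 4, and c̃_2(M) = max{ λ_min(M)^{−1}, q_1^{−1} + r_1^{−1} } (‖·‖ is the spectral norm). -/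
open Matrix Filter Finset

noncomputable section

/-- Loewner strict order `A < B`. -/
def loewnerLT {m : Type*} [Fintype m] (A B : Matrix m m ℝ) : Prop := (B - A).PosDef

/-- Loewner order `A ≤ B`. -/
def loewnerLE {m : Type*} [Fintype m] (A B : Matrix m m ℝ) : Prop := (B - A).PosSemidef

/-- smallest (real) eigenvalue of a matrix -/
def lamMin {N : ℕ} (M : Matrix (Fin N) (Fin N) ℝ) : ℝ :=
  sInf {t : ℝ | ∃ v : Fin N → ℝ, v ≠ 0 ∧ M.mulVec v = t • v}

/-- largest (real) eigenvalue of a matrix -/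
def lamMax {N : ℕ} (M : Matrix (Fin N) (Fin N) ℝ) : ℝ :=
  sSup {t : ℝ | ∃ v : Fin N → ℝ, v ≠ 0 ∧ M.mulVec v = t • v}

/-- spectral norm (ℓ²-operator norm) of a square matrix -/
def matSpectralNorm {N : ℕ} (M : Matrix (Fin N) (Fin N) ℝ) : ℝ :=
  ‖Matrix.toEuclideanCLM (𝕜 := ℝ) M‖

/-- largest singular value -/
def sigmaMax {N : ℕ} (M : Matrix (Fin N) (Fin N) ℝ) : ℝ := matSpectralNorm M

/-- maximum absolute row-sum matrix norm -/
def rowSumNorm {m n : ℕ} (M : Matrix (Fin m) (Fin n) ℝ) : ℝ :=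
  ⨆ i : Fin m, ∑ j, |M i j|

/-- Euclidean norm of a vector -/
def euclNorm {N : ℕ} (v : Fin N → ℝ) : ℝ := Real.sqrt (∑ j, (v j) ^ 2)

/-- the free-flow mode matrix A_FF -/
def matAFF (N : ℕ) (θv : ℝ) : Matrix (Fin N) (Fin N) ℝ :=
  Matrix.of fun i j =>
    if (i : ℕ) = 0 ∧ (j : ℕ) = 0 then 1
    else if i = j then 1 - θv
    else if (i : ℕ) = (j : ℕ) + 1 then θv
    else 0

/-- the congestion mode matrix A_CC -/
def matACC (N : ℕ) (θw : ℝ) : Matrix (Fin N) (Fin N) ℝ :=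
  Matrix.of fun i j =>
    if (i : ℕ) = N - 1 ∧ (j : ℕ) = N - 1 then 1
    else if i = j then 1 - θw
    else if (j : ℕ) = (i : ℕ) + 1 then θw
    else 0

/-- the congestion–freeflow mode matrix A_CF^s = diag(Δ_s, Θ_{N−s}) -/
def matACF (N s : ℕ) (θv θw : ℝ) : Matrix (Fin N) (Fin N) ℝ :=
  Matrix.of fun i j =>
    if (i : ℕ) < s ∧ (j : ℕ) < s then
      (if i = j then 1 - θw else if (j : ℕ) = (i : ℕ) + 1 then θw else 0)
    else if s ≤ (i : ℕ) ∧ s ≤ (j : ℕ) then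
      (if i = j then 1 - θv else if (i : ℕ) = (j : ℕ) + 1 then θv else 0)
    else 0

/-- set of observable-mode state transition matrices 𝒜_O -/
def setAO (N : ℕ) (θv θw : ℝ) : Set (Matrix (Fin N) (Fin N) ℝ) :=
  {matAFF N θv, matACC N θw} ∪ {M | ∃ s, 1 ≤ s ∧ s ≤ N - 1 ∧ M = matACF N s θv θw}

/-- boundary output matrix H_b, rows e_1ᵀ and e_nᵀ -/
def matHb (N : ℕ) : Matrix (Fin 2) (Fin N) ℝ :=
  Matrix.of fun i j =>
    if (i : ℕ) = 0 ∧ (j : ℕ) = 0 then 1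
    else if (i : ℕ) = 1 ∧ (j : ℕ) = N - 1 then 1
    else 0

/-- standing assumption on output matrices: pairwise distinct standard basis rows,
including e_1ᵀ and e_nᵀ -/
def standingH {mk N : ℕ} (H : Matrix (Fin mk) (Fin N) ℝ) : Prop :=
  (∀ p : Fin mk, ∃ l : Fin N, H p = fun j => if j = l then 1 else 0) ∧
  (∀ p q : Fin mk, H p = H q → p = q) ∧
  (∃ p : Fin mk, H p = fun j : Fin N => if (j : ℕ) = 0 then 1 else 0) ∧
  (∃ p : Fin mk, H p = fun j : Fin N => if (j : ℕ) = N - 1 then 1 else 0)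

/-- ascending product of inverses  M_lo⁻¹ · M_{lo+1}⁻¹ ⋯ M_hi⁻¹ -/
def prodInvAsc {N : ℕ} (M : ℕ → Matrix (Fin N) (Fin N) ℝ) (lo hi : ℕ) :
    Matrix (Fin N) (Fin N) ℝ :=
  ((List.range (hi + 1 - lo)).map (fun t => (M (lo + t))⁻¹)).prod

/-- descending product  M_hi · M_{hi−1} ⋯ M_lo -/
def prodDesc {N : ℕ} (M : ℕ → Matrix (Fin N) (Fin N) ℝ) (hi lo : ℕ) :
    Matrix (Fin N) (Fin N) ℝ :=
  ((List.range (hi + 1 - lo)).map (fun t => M (hi - t))).prod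

/-- a_𝓘 -/
def aI (N : ℕ) (θv θw r2 : ℝ) : ℝ :=
  r2⁻¹ * sInf {t : ℝ | ∃ M : ℕ → Matrix (Fin N) (Fin N) ℝ,
    (∀ ι, 1 ≤ ι → ι ≤ max 1 (N - 2) → M ι ∈ setAO N θv θw) ∧
    t = lamMin ((matHb N)ᵀ * matHb N +
      ∑ ι ∈ Finset.Icc 1 (max 1 (N - 2)),
        (prodInvAsc M ι (max 1 (N - 2)))ᵀ * (matHb N)ᵀ * matHb N *
          prodInvAsc M ι (max 1 (N - 2)))}

/-- b_𝓘 -/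
def bI (N : ℕ) (θv θw r1 : ℝ) : ℝ :=
  r1⁻¹ * sSup {t : ℝ | ∃ M : ℕ → Matrix (Fin N) (Fin N) ℝ,
    (∀ ι, 1 ≤ ι → ι ≤ max 1 (N - 2) → M ι ∈ setAO N θv θw) ∧
    t = lamMax (1 +
      ∑ ι ∈ Finset.Icc 1 (max 1 (N - 2)),
        (prodInvAsc M ι (max 1 (N - 2)))ᵀ * prodInvAsc M ι (max 1 (N - 2)))}

/-- a_𝓒 -/
def aC (N : ℕ) (θv θw q1 : ℝ) : ℝ :=
  q1 * sInf {t : ℝ | ∃ M : ℕ → Matrix (Fin N) (Fin N) ℝ,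
    (∀ ι, 1 ≤ ι → ι ≤ max 1 (N - 2) → M ι ∈ setAO N θv θw) ∧
    t = lamMin (1 +
      ∑ ι ∈ Finset.Icc 1 (max 1 (N - 2) - 1),
        prodDesc M (max 1 (N - 2) - 1) ι * (prodDesc M (max 1 (N - 2) - 1) ι)ᵀ)}

/-- b_𝓒 -/
def bC (N : ℕ) (θv θw q2 : ℝ) : ℝ :=
  q2 * sSup {t : ℝ | ∃ M : ℕ → Matrix (Fin N) (Fin N) ℝ,
    (∀ ι, 1 ≤ ι → ι ≤ max 1 (N - 2) → M ι ∈ setAO N θv θw) ∧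
    t = lamMax (1 +
      ∑ ι ∈ Finset.Icc 1 (max 1 (N - 2) - 1),
        prodDesc M (max 1 (N - 2) - 1) ι * (prodDesc M (max 1 (N - 2) - 1) ι)ᵀ)}

/-- constant c₁ -/
def cLow (N : ℕ) (θv θw q1 q2 r1 r2 : ℝ) : ℝ :=
  min (aI N θv θw r2) (aC N θv θw q1) /
    (1 + min (aI N θv θw r2) (aC N θv θw q1) * max (bI N θv θw r1) (bC N θv θw q2))

/-- constant c₂ -/
def cHigh (N : ℕ) (θv θw q1 q2 r1 r2 : ℝ) : ℝ :=
  (1 + min (aI N θv θw r2) (aC N θv θw q1) * max (bI N θv θw r1) (bC N θv θw q2)) /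
    min (aI N θv θw r2) (aC N θv θw q1)


/-- the function `c̃₁` of Lemma 2 -/
def cTilde1 (N : ℕ) (q2 : ℝ) (M : Matrix (Fin N) (Fin N) ℝ) : ℝ :=
  if 4 ≤ N then
    (2 * ((2 * N - 5 : ℕ) : ℝ) * matSpectralNorm M +
      (2 * ((N - 3 : ℕ) : ℝ) ^ 2 - 1) * q2)⁻¹
  else (matSpectralNorm M)⁻¹

/-- the function `c̃₂` of Lemma 2 -/
def cTilde2 (N : ℕ) (q1 r1 : ℝ) (M : Matrix (Fin N) (Fin N) ℝ) : ℝ :=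
  max (lamMin M)⁻¹ (q1⁻¹ + r1⁻¹)

/-! The measurement update only decreases the covariance, so
`Γ_{k|k} ≤ A Γ_{k-1|k-1} Aᵀ + q₂ I`, and unrolling gives
`Γ_{k|k} ≤ ‖Γ₀‖ Φ_k Φ_kᵀ + q₂ ∑_{m<k} Φ_m Φ_mᵀ` with `Φ_m` a product of `m` mode matrices.
Every mode matrix is entrywise nonnegative with row sums at most `1` and column sums at most `1`,
except for one column whose sum is at most `2`; hence a product of `m` of them has column sums at
most `1 + m`, and the Schur test gives `Φ_m Φ_mᵀ ≤ (1 + m) I`. Thus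
`Γ_{k|k} ≤ (‖Γ₀‖ (k + 1) + q₂ k²) I ≤ c̃₁⁻¹ I` for `k < max 1 (n - 2)`, and inverting gives the
lower bound. The upper bound comes from the information form
`Γ_{k|k}⁻¹ = Γ_{k|k-1}⁻¹ + Hᵀ R⁻¹ H`, with `Γ_{k|k-1} ≥ q₁ I`, `R ≥ r₁ I` and `Hᵀ H ≤ I`
(for `k = 0` directly from `Γ₀ ≥ λ_min(Γ₀) I`). Loewner comparisons with scalar matrices are
read off the spectrum through the continuous functional calculus. -/

open scoped MatrixOrder

namespace Matrix

section Loewner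

variable {ι κ : Type*} [Fintype ι] [Fintype κ]

lemma PosSemidef.mul_mul_transpose_same {M : Matrix ι ι ℝ} (hM : M.PosSemidef)
    (B : Matrix κ ι ℝ) : (B * M * Bᵀ).PosSemidef := by
  simpa using hM.mul_mul_conjTranspose_same B

lemma PosSemidef.transpose_mul_mul_same {M : Matrix ι ι ℝ} (hM : M.PosSemidef)
    (B : Matrix ι κ ℝ) : (Bᵀ * M * B).PosSemidef := by
  simpa using hM.conjTranspose_mul_mul_same B

lemma mul_mul_transpose_mono {X Y : Matrix ι ι ℝ} (h : X ≤ Y) (B : Matrix κ ι ℝ) :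
    B * X * Bᵀ ≤ B * Y * Bᵀ := by
  rw [le_iff] at h ⊢
  simpa [Matrix.mul_sub, Matrix.sub_mul] using h.mul_mul_transpose_same B

lemma transpose_mul_mul_mono {X Y : Matrix ι ι ℝ} (h : X ≤ Y) (B : Matrix ι κ ℝ) :
    Bᵀ * X * B ≤ Bᵀ * Y * B := by
  simpa using mul_mul_transpose_mono h Bᵀ

variable [DecidableEq ι] {M : Matrix ι ι ℝ}

lemma smul_one_le_iff (hM : M.IsHermitian) {r : ℝ} :
    r • (1 : Matrix ι ι ℝ) ≤ M ↔ ∀ x ∈ spectrum ℝ M, r ≤ x := by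
  rw [← Algebra.algebraMap_eq_smul_one]
  exact algebraMap_le_iff_le_spectrum hM.isSelfAdjoint

lemma le_smul_one_iff (hM : M.IsHermitian) {r : ℝ} :
    M ≤ r • (1 : Matrix ι ι ℝ) ↔ ∀ x ∈ spectrum ℝ M, x ≤ r := by
  rw [← Algebra.algebraMap_eq_smul_one]
  exact le_algebraMap_iff_spectrum_le hM.isSelfAdjoint

lemma PosDef.inv_inv (hM : M.PosDef) : M⁻¹⁻¹ = M :=
  nonsing_inv_nonsing_inv M ((isUnit_iff_isUnit_det M).1 hM.isUnit)

lemma PosDef.pos_of_mem_spectrum (hM : M.PosDef) {x : ℝ} (hx : x ∈ spectrum ℝ M) : 0 < x := by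
  rw [hM.isHermitian.spectrum_real_eq_range_eigenvalues] at hx
  obtain ⟨i, rfl⟩ := hx
  exact hM.eigenvalues_pos i

lemma PosDef.inv_eq_cfc (hM : M.PosDef) : M⁻¹ = cfc (fun x : ℝ => x⁻¹) M := by
  rw [cfc_ringInverse_id (ha_unit := hM.isUnit) (ha := hM.isHermitian.isSelfAdjoint),
    nonsing_inv_eq_ringInverse]

lemma PosDef.continuousOn_inv_spectrum (hM : M.PosDef) :
    ContinuousOn (fun x : ℝ => x⁻¹) (spectrum ℝ M) :=
  continuousOn_inv₀.mono fun _ hx => (hM.pos_of_mem_spectrum hx).ne'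

lemma PosDef.inv_le_smul_one_iff (hM : M.PosDef) {r : ℝ} :
    M⁻¹ ≤ r • (1 : Matrix ι ι ℝ) ↔ ∀ x ∈ spectrum ℝ M, x⁻¹ ≤ r := by
  rw [hM.inv_eq_cfc, ← Algebra.algebraMap_eq_smul_one]
  exact cfc_le_algebraMap_iff _ _ _ hM.continuousOn_inv_spectrum hM.isHermitian.isSelfAdjoint

lemma PosDef.smul_one_le_inv_iff (hM : M.PosDef) {r : ℝ} :
    r • (1 : Matrix ι ι ℝ) ≤ M⁻¹ ↔ ∀ x ∈ spectrum ℝ M, r ≤ x⁻¹ := by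
  rw [hM.inv_eq_cfc, ← Algebra.algebraMap_eq_smul_one]
  exact algebraMap_le_cfc_iff _ _ _ hM.continuousOn_inv_spectrum hM.isHermitian.isSelfAdjoint

lemma PosDef.inv_le_inv_smul_one (hM : M.PosDef) {a : ℝ} (ha : 0 < a) (h : a • 1 ≤ M) :
    M⁻¹ ≤ a⁻¹ • (1 : Matrix ι ι ℝ) :=
  hM.inv_le_smul_one_iff.2 fun x hx => inv_anti₀ ha ((smul_one_le_iff hM.isHermitian).1 h x hx)

lemma PosDef.inv_smul_one_le_inv (hM : M.PosDef) {c : ℝ} (h : M ≤ c • 1) :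
    c⁻¹ • (1 : Matrix ι ι ℝ) ≤ M⁻¹ :=
  hM.smul_one_le_inv_iff.2 fun x hx =>
    inv_anti₀ (hM.pos_of_mem_spectrum hx) ((le_smul_one_iff hM.isHermitian).1 h x hx)

end Loewner

end Matrix

lemma loewnerLE_iff_le {ι : Type*} [Fintype ι] {A B : Matrix ι ι ℝ} : loewnerLE A B ↔ A ≤ B :=
  Iff.rfl

lemma posDef_of_loewnerLT_smul_one {ι : Type*} [Fintype ι] [DecidableEq ι]
    {M : Matrix ι ι ℝ} {a : ℝ} (ha : 0 ≤ a) (h : loewnerLT (a • 1) M) : M.PosDef := by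
  simpa using Matrix.PosDef.add_posSemidef h (Matrix.PosSemidef.one.smul ha)

section SpectralBounds

variable {N : ℕ} {M : Matrix (Fin N) (Fin N) ℝ}

lemma lamMin_eq_sInf_spectrum (M : Matrix (Fin N) (Fin N) ℝ) :
    lamMin M = sInf (spectrum ℝ M) := by
  rw [lamMin, ← Matrix.spectrum_toLin']
  congr 1
  ext t
  rw [← Module.End.hasEigenvalue_iff_mem_spectrum]
  simp [Module.End.hasEigenvalue_iff, Submodule.ne_bot_iff, and_comm]

lemma Matrix.PosDef.inv_le_inv_lamMin_smul_one (hM : M.PosDef) :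
    M⁻¹ ≤ (lamMin M)⁻¹ • (1 : Matrix (Fin N) (Fin N) ℝ) := by
  refine hM.inv_le_smul_one_iff.2 fun x hx => ?_
  have hfin := Matrix.finite_real_spectrum (A := M)
  rw [lamMin_eq_sInf_spectrum]
  exact inv_anti₀ (hM.pos_of_mem_spectrum (Set.Nonempty.csInf_mem ⟨x, hx⟩ hfin))
    (csInf_le hfin.bddBelow hx)

lemma abs_le_matSpectralNorm {x : ℝ} (hx : x ∈ spectrum ℝ M) : |x| ≤ matSpectralNorm M := by
  rw [← AlgEquiv.spectrum_eq (Matrix.toEuclideanCLM (𝕜 := ℝ) (n := Fin N)) M] at hx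
  have := spectrum.subset_closedBall_norm_mul _ hx
  rw [Metric.mem_closedBall, dist_zero_right, Real.norm_eq_abs] at this
  exact this.trans (mul_le_of_le_one_right (norm_nonneg _) ContinuousLinearMap.norm_id_le)

lemma le_matSpectralNorm_smul_one (hM : M.IsHermitian) : M ≤ matSpectralNorm M • 1 :=
  (Matrix.le_smul_one_iff hM).2 fun _ hx => (le_abs_self _).trans (abs_le_matSpectralNorm hx)

lemma Matrix.PosDef.matSpectralNorm_pos (hM : M.PosDef) (hN : 0 < N) : 0 < matSpectralNorm M :=
  have hx := hM.isHermitian.eigenvalues_mem_spectrum_real ⟨0, hN⟩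
  (hM.pos_of_mem_spectrum hx).trans_le ((le_abs_self _).trans (abs_le_matSpectralNorm hx))

end SpectralBounds

section KalmanUpdate

variable {ι κ : Type*} [Fintype ι] [Fintype κ] [DecidableEq κ]

/-- Woodbury identity. -/
theorem kalman_update_eq_inv [DecidableEq ι] {Γ : Matrix ι ι ℝ} {R : Matrix κ κ ℝ} (hΓ : Γ.PosDef)
    (hR : R.PosDef) (H : Matrix κ ι ℝ) :
    Γ - Γ * Hᵀ * (R + H * Γ * Hᵀ)⁻¹ * H * Γ = (Γ⁻¹ + Hᵀ * R⁻¹ * H)⁻¹ := by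
  have hS : (R + H * Γ * Hᵀ).PosDef := hR.add_posSemidef (hΓ.posSemidef.mul_mul_transpose_same H)
  rw [add_mul_mul_inv_eq_sub _ _ _ _ hΓ.inv.isUnit hR.inv.isUnit, hΓ.inv_inv, hR.inv_inv]
  simpa only [hΓ.inv_inv, hR.inv_inv] using hS.isUnit

theorem kalman_update_le {Γ : Matrix ι ι ℝ} {R : Matrix κ κ ℝ} (hΓ : Γ.PosSemidef)
    (hR : R.PosSemidef) (H : Matrix κ ι ℝ) :
    Γ - Γ * Hᵀ * (R + H * Γ * Hᵀ)⁻¹ * H * Γ ≤ Γ := by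
  have hS : (R + H * Γ * Hᵀ)⁻¹.PosSemidef := (hR.add (hΓ.mul_mul_transpose_same H)).inv
  have hΓt : Γᵀ = Γ := by simpa using hΓ.isHermitian.eq
  have := hS.mul_mul_transpose_same (Γ * Hᵀ)
  rw [Matrix.transpose_mul, Matrix.transpose_transpose, hΓt] at this
  rw [sub_le_self_iff, Matrix.nonneg_iff_posSemidef]
  simpa only [Matrix.mul_assoc] using this

end KalmanUpdate

section Substochastic

variable {ι κ : Type*} [Fintype ι] [Fintype κ]

structure IsSubstochastic (M : Matrix ι κ ℝ) (c : ℝ) : Prop where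
  nonneg : ∀ i j, 0 ≤ M i j
  row_sum_le : ∀ i, ∑ j, M i j ≤ 1
  col_sum_le : ∀ j, ∑ i, M i j ≤ c

namespace IsSubstochastic

variable {M : Matrix ι κ ℝ} {c : ℝ}

lemma one [DecidableEq ι] : IsSubstochastic (1 : Matrix ι ι ℝ) 1 where
  nonneg i j := by rw [Matrix.one_apply]; positivity
  row_sum_le i := by simp [Matrix.one_apply]
  col_sum_le j := by simp [Matrix.one_apply]

lemma mono (hM : IsSubstochastic M c) {c' : ℝ} (hc : c ≤ c') : IsSubstochastic M c' :=
  ⟨hM.nonneg, hM.row_sum_le, fun j => (hM.col_sum_le j).trans hc⟩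

lemma le_one (hM : IsSubstochastic M c) (i : ι) (j : κ) : M i j ≤ 1 :=
  (Finset.single_le_sum (fun j _ => hM.nonneg i j) (Finset.mem_univ j)).trans (hM.row_sum_le i)

lemma transpose (hM : IsSubstochastic M 1) : IsSubstochastic Mᵀ 1 :=
  ⟨fun i j => hM.nonneg j i, hM.col_sum_le, hM.row_sum_le⟩

/-- Only the column `j₀` of `A` can raise a column sum, and by at most `M j₀ j ≤ 1`. -/
lemma mul [DecidableEq ι] {A : Matrix ι ι ℝ} (hA : IsSubstochastic A 2) {j₀ : ι}
    (hAcol : ∀ j ≠ j₀, ∑ i, A i j ≤ 1) (hM : IsSubstochastic M c) :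
    IsSubstochastic (A * M) (c + 1) where
  nonneg i j := Finset.sum_nonneg fun k _ => mul_nonneg (hA.nonneg i k) (hM.nonneg k j)
  row_sum_le i := by
    simp only [Matrix.mul_apply]
    rw [Finset.sum_comm]
    calc ∑ k, ∑ j, A i k * M k j = ∑ k, A i k * ∑ j, M k j := by simp only [Finset.mul_sum]
      _ ≤ ∑ k, A i k * 1 := by
        gcongr with k; exacts [hA.nonneg i k, hM.row_sum_le k]
      _ ≤ 1 := by simpa using hA.row_sum_le i
  col_sum_le j := by
    simp only [Matrix.mul_apply]
    rw [Finset.sum_comm]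
    have hk : ∀ k, (∑ i, A i k) * M k j ≤ M k j + if k = j₀ then M j₀ j else 0 := by
      intro k
      split_ifs with hkj₀
      · subst hkj₀
        nlinarith [hA.col_sum_le k, hM.nonneg k j]
      · nlinarith [hAcol k hkj₀, hM.nonneg k j]
    calc ∑ k, ∑ i, A i k * M k j = ∑ k, (∑ i, A i k) * M k j := by simp only [Finset.sum_mul]
      _ ≤ ∑ k, (M k j + if k = j₀ then M j₀ j else 0) := Finset.sum_le_sum fun k _ => hk k
      _ = ∑ k, M k j + M j₀ j := by simp [Finset.sum_add_distrib]
      _ ≤ c + 1 := add_le_add (hM.col_sum_le j) (hM.le_one j₀ j)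

lemma transpose_mulVec_dotProduct_le (hM : IsSubstochastic M c) (hc : 0 ≤ c) (x : ι → ℝ) :
    (Mᵀ *ᵥ x) ⬝ᵥ (Mᵀ *ᵥ x) ≤ c * (x ⬝ᵥ x) := by
  have hcol : ∀ j, (∑ i, M i j * x i) ^ 2 ≤ c * ∑ i, M i j * x i ^ 2 := fun j =>
    calc (∑ i, M i j * x i) ^ 2 ≤ (∑ i, M i j) * ∑ i, M i j * x i ^ 2 :=
          Finset.sum_sq_le_sum_mul_sum_of_sq_le_mul _ (fun i _ => hM.nonneg i j)
            (fun i _ => mul_nonneg (hM.nonneg i j) (sq_nonneg _)) (fun i _ => by ring_nf; rfl)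
      _ ≤ c * ∑ i, M i j * x i ^ 2 := by
          gcongr
          · exact Finset.sum_nonneg fun i _ => mul_nonneg (hM.nonneg i j) (sq_nonneg _)
          · exact hM.col_sum_le j
  calc (Mᵀ *ᵥ x) ⬝ᵥ (Mᵀ *ᵥ x) = ∑ j, (∑ i, M i j * x i) ^ 2 := by
        simp [dotProduct, Matrix.mulVec, sq]
    _ ≤ ∑ j, c * ∑ i, M i j * x i ^ 2 := Finset.sum_le_sum fun j _ => hcol j
    _ = c * ∑ i, (∑ j, M i j) * x i ^ 2 := by
        rw [← Finset.mul_sum, Finset.sum_comm]; simp only [Finset.sum_mul]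
    _ ≤ c * ∑ i, 1 * x i ^ 2 := by
        gcongr with i; exact hM.row_sum_le i
    _ = c * (x ⬝ᵥ x) := by simp [dotProduct, sq]

/-- Schur test. -/
lemma mul_transpose_le [DecidableEq ι] (hM : IsSubstochastic M c) (hc : 0 ≤ c) :
    M * Mᵀ ≤ c • (1 : Matrix ι ι ℝ) := by
  rw [Matrix.le_iff]
  refine Matrix.PosSemidef.of_dotProduct_mulVec_nonneg ?_ fun x => ?_
  · simp [Matrix.IsHermitian, Matrix.conjTranspose_eq_transpose_of_trivial, Matrix.transpose_sub]
  have := hM.transpose_mulVec_dotProduct_le hc x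
  simp only [star_trivial, Matrix.sub_mulVec, Matrix.smul_mulVec, Matrix.one_mulVec, dotProduct_sub,
    dotProduct_smul, smul_eq_mul]
  rw [← Matrix.mulVec_mulVec, Matrix.dotProduct_mulVec, ← Matrix.mulVec_transpose]
  linarith

end IsSubstochastic

lemma Finset.sum_ite_le_of_subsingleton {P : ι → Prop} [DecidablePred P] {f : ι → ℝ} {c : ℝ}
    (hP : ∀ a b, P a → P b → a = b) (hc : 0 ≤ c) (hf : ∀ i, P i → f i ≤ c) :
    ∑ i, (if P i then f i else 0) ≤ c := by
  by_cases h : ∃ i, P i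
  · obtain ⟨i, hi⟩ := h
    rw [Finset.sum_eq_single i (fun b _ hb => if_neg fun hPb => hb (hP b i hPb hi))
      (fun h => (h (Finset.mem_univ i)).elim), if_pos hi]
    exact hf i hi
  · push Not at h
    simpa [h] using hc

end Substochastic

section Tridiagonal

variable {N : ℕ} {d l u : ℕ → ℝ}

def tridiag (N : ℕ) (d l u : ℕ → ℝ) : Matrix (Fin N) (Fin N) ℝ :=
  Matrix.of fun i j =>
    (if (i : ℕ) = j then d i else 0) + (if (i : ℕ) = j + 1 then l i else 0) +
      (if (j : ℕ) = i + 1 then u i else 0)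

lemma tridiag_nonneg (hd : ∀ m, 0 ≤ d m) (hl : ∀ m, 0 ≤ l m) (hu : ∀ m, 0 ≤ u m) (i j : Fin N) :
    0 ≤ tridiag N d l u i j := by
  simp only [tridiag, Matrix.of_apply]
  have := hd i; have := hl i; have := hu i
  split_ifs <;> linarith

lemma sum_tridiag_row_le (hd : ∀ m, 0 ≤ d m) (hl : ∀ m, 0 ≤ l m) (hu : ∀ m, 0 ≤ u m)
    (i : Fin N) : ∑ j, tridiag N d l u i j ≤ d i + l i + u i := by
  simp only [tridiag, Matrix.of_apply, Finset.sum_add_distrib]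
  gcongr <;> refine Finset.sum_ite_le_of_subsingleton (fun a b ha hb => ?_) (by simp [*])
    (fun _ _ => le_rfl) <;> ext <;> omega

lemma sum_tridiag_col_le (hd : ∀ m, 0 ≤ d m) (hl : ∀ m, 0 ≤ l m) (hu : ∀ m, 0 ≤ u m) (j : Fin N) :
    ∑ i, tridiag N d l u i j ≤ d j + l (j + 1) + u (j - 1) := by
  simp only [tridiag, Matrix.of_apply, Finset.sum_add_distrib]
  gcongr <;> refine Finset.sum_ite_le_of_subsingleton (fun a b ha hb => ?_) (by simp [*])
    (fun i hi => ?_)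
  all_goals first | (ext; omega) | rw [show (i : ℕ) = (j : ℕ) - 1 by omega] | rw [hi]

lemma isSubstochastic_tridiag {c : ℝ} (hd : ∀ m, 0 ≤ d m) (hl : ∀ m, 0 ≤ l m) (hu : ∀ m, 0 ≤ u m)
    (hrow : ∀ m, d m + l m + u m ≤ 1) (hcol : ∀ m, d m + l (m + 1) + u (m - 1) ≤ c) :
    IsSubstochastic (tridiag N d l u) c :=
  ⟨tridiag_nonneg hd hl hu, fun i => (sum_tridiag_row_le hd hl hu i).trans (hrow i),
    fun j => (sum_tridiag_col_le hd hl hu j).trans (hcol j)⟩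

lemma isSubstochastic_tridiag_of_col_le {m₀ : ℕ} (hm₀ : m₀ < N) (hd : ∀ m, 0 ≤ d m)
    (hl : ∀ m, 0 ≤ l m) (hu : ∀ m, 0 ≤ u m) (hrow : ∀ m, d m + l m + u m ≤ 1)
    (hcol : ∀ m, d m + l (m + 1) + u (m - 1) ≤ 1 + if m = m₀ then 1 else 0) :
    IsSubstochastic (tridiag N d l u) 2 ∧ ∃ j₀, ∀ j ≠ j₀, ∑ i, tridiag N d l u i j ≤ 1 := by
  refine ⟨isSubstochastic_tridiag hd hl hu hrow fun m => (hcol m).trans ?_, ⟨m₀, hm₀⟩,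
    fun j hj => ?_⟩
  · split_ifs <;> norm_num
  · have hj : (j : ℕ) ≠ m₀ := fun h => hj (Fin.ext h)
    simpa [hj] using (sum_tridiag_col_le hd hl hu j).trans (hcol j)

-- `l` vanishes on row `0`, where there is no subdiagonal entry, so the row bound is attained.
lemma matAFF_eq_tridiag (θ : ℝ) :
    matAFF N θ =
      tridiag N (fun m => if m = 0 then 1 else 1 - θ) (fun m => if m = 0 then 0 else θ) 0 := by
  ext i j
  simp only [matAFF, tridiag, Matrix.of_apply, Fin.ext_iff, Pi.zero_apply]
  split_ifs <;> first | (exfalso; omega) | ring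

lemma matACC_eq_tridiag (θ : ℝ) :
    matACC N θ = tridiag N (fun m => if m = N - 1 then 1 else 1 - θ) 0
      (fun m => if m = N - 1 then 0 else θ) := by
  ext i j
  simp only [matACC, tridiag, Matrix.of_apply, Fin.ext_iff, Pi.zero_apply]
  split_ifs <;> first | (exfalso; omega) | ring

lemma matACF_eq_tridiag (s : ℕ) (θv θw : ℝ) :
    matACF N s θv θw = tridiag N (fun m => if m < s then 1 - θw else 1 - θv)
      (fun m => if s + 1 ≤ m then θv else 0) (fun m => if m + 1 < s then θw else 0) := by
  ext i j
  simp only [matACF, tridiag, Matrix.of_apply, Fin.ext_iff]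
  split_ifs <;> first | (exfalso; omega) | ring

end Tridiagonal

lemma isSubstochastic_of_mem_setAO {N : ℕ} {θv θw : ℝ} (hv : 0 ≤ θv) (hv1 : θv ≤ 1) (hw : 0 ≤ θw)
    (hw1 : θw ≤ 1) (hN : 0 < N) {A : Matrix (Fin N) (Fin N) ℝ} (hA : A ∈ setAO N θv θw) :
    IsSubstochastic A 2 ∧ ∃ j₀, ∀ j ≠ j₀, ∑ i, A i j ≤ 1 := by
  rcases hA with (rfl | rfl) | ⟨s, -, -, rfl⟩
  · rw [matAFF_eq_tridiag]
    refine isSubstochastic_tridiag_of_col_le (m₀ := 0) hN ?_ ?_ ?_ ?_ ?_ <;> intro m <;>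
      (try simp only [Pi.zero_apply]) <;> (try split_ifs) <;> linarith
  · rw [matACC_eq_tridiag]
    refine isSubstochastic_tridiag_of_col_le (m₀ := N - 1) (by omega) ?_ ?_ ?_ ?_ ?_ <;>
      intro m <;>
      (try simp only [Pi.zero_apply]) <;> (try split_ifs) <;> linarith
  · rw [matACF_eq_tridiag]
    refine isSubstochastic_tridiag_of_col_le (m₀ := 0) hN ?_ ?_ ?_ ?_ ?_ <;> intro m <;>
      split_ifs <;> first | linarith | (exfalso; omega)

section Transition

variable {ι : Type*} [Fintype ι] [DecidableEq ι]

/-- `transitionProd A k m = A (k - 1) * ⋯ * A (k - m)`, the product of the last `min k m`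
transitions before time `k`. -/
def transitionProd (A : ℕ → Matrix ι ι ℝ) : ℕ → ℕ → Matrix ι ι ℝ
  | _, 0 => 1
  | 0, _ + 1 => 1
  | k + 1, m + 1 => A k * transitionProd A k m

lemma isSubstochastic_transitionProd {A : ℕ → Matrix ι ι ℝ}
    (hA : ∀ k, IsSubstochastic (A k) 2 ∧ ∃ j₀, ∀ j ≠ j₀, ∑ i, A k i j ≤ 1) :
    ∀ k m, IsSubstochastic (transitionProd A k m) (1 + m)
  | _, 0 => by simpa [transitionProd] using IsSubstochastic.one
  | 0, m + 1 => IsSubstochastic.one.mono (le_add_of_nonneg_right (Nat.cast_nonneg _))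
  | k + 1, m + 1 => by
    obtain ⟨hAk, j₀, hj₀⟩ := hA k
    simpa [transitionProd, add_assoc] using hAk.mul hj₀ (isSubstochastic_transitionProd hA k m)

theorem le_of_lyapunov_le {A P : ℕ → Matrix ι ι ℝ} {p q : ℝ} (h0 : P 0 ≤ p • 1)
    (hstep : ∀ k, P (k + 1) ≤ A k * P k * (A k)ᵀ + q • 1) (k : ℕ) :
    P k ≤ p • (transitionProd A k k * (transitionProd A k k)ᵀ) +
      q • ∑ m ∈ range k, transitionProd A k m * (transitionProd A k m)ᵀ := by
  induction k with
  | zero => simpa [transitionProd] using h0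
  | succ k ih =>
    refine (hstep k).trans
      ((add_le_add_left (Matrix.mul_mul_transpose_mono ih (A k)) _).trans_eq ?_)
    simp only [transitionProd, sum_range_succ', Matrix.mul_add, Matrix.add_mul, Matrix.mul_smul,
      Matrix.smul_mul, Matrix.mul_sum, Matrix.sum_mul, Matrix.transpose_mul, Matrix.mul_assoc,
      Matrix.transpose_one, Matrix.mul_one, smul_add]
    abel

theorem le_smul_one_of_lyapunov_le {A P : ℕ → Matrix ι ι ℝ} {p q : ℝ} (hp : 0 ≤ p) (hq : 0 ≤ q)
    (hA : ∀ k, IsSubstochastic (A k) 2 ∧ ∃ j₀, ∀ j ≠ j₀, ∑ i, A k i j ≤ 1) (h0 : P 0 ≤ p • 1)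
    (hstep : ∀ k, P (k + 1) ≤ A k * P k * (A k)ᵀ + q • 1) (k : ℕ) :
    P k ≤ (p * (k + 1) + q * k ^ 2) • (1 : Matrix ι ι ℝ) := by
  have hΦ : ∀ m, transitionProd A k m * (transitionProd A k m)ᵀ ≤ (1 + m : ℝ) • 1 := fun m =>
    (isSubstochastic_transitionProd hA k m).mul_transpose_le (by positivity)
  have hsum : ∑ m ∈ range k, transitionProd A k m * (transitionProd A k m)ᵀ ≤
      (k ^ 2 : ℝ) • (1 : Matrix ι ι ℝ) :=
    calc _ ≤ ∑ m ∈ range k, (k : ℝ) • (1 : Matrix ι ι ℝ) := sum_le_sum fun m hm =>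
          (hΦ m).trans (smul_le_smul_of_nonneg_right
            (by have := mem_range.1 hm; norm_cast; omega) zero_le_one)
      _ = _ := by rw [sum_const, card_range, ← Nat.cast_smul_eq_nsmul ℝ, smul_smul, sq]
  calc P k ≤ _ := le_of_lyapunov_le h0 hstep k
    _ ≤ p • ((1 + k : ℝ) • 1) + q • ((k ^ 2 : ℝ) • 1) :=
      add_le_add (smul_le_smul_of_nonneg_left (hΦ k) hp) (smul_le_smul_of_nonneg_left hsum hq)
    _ = _ := by rw [smul_smul, smul_smul, ← add_smul]; ring_nf

end Transition

section KalmanRecursion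

variable {ι : Type*} [Fintype ι] {μ : ℕ → Type*} [∀ k, Fintype (μ k)]
  [∀ k, DecidableEq (μ k)]

structure IsKalmanRecursion (A Q : ℕ → Matrix ι ι ℝ) (H : ∀ k, Matrix (μ k) ι ℝ)
    (R : ∀ k, Matrix (μ k) (μ k) ℝ) (K : ∀ k, Matrix ι (μ k) ℝ)
    (Γpost Γprior : ℕ → Matrix ι ι ℝ) : Prop where
  prior : ∀ k, Γprior (k + 1) = A k * Γpost k * (A k)ᵀ + Q k
  gain : ∀ k, K (k + 1) = Γprior (k + 1) * (H (k + 1))ᵀ *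
    (R (k + 1) + H (k + 1) * Γprior (k + 1) * (H (k + 1))ᵀ)⁻¹
  post : ∀ k, Γpost (k + 1) = Γprior (k + 1) - K (k + 1) * H (k + 1) * Γprior (k + 1)

namespace IsKalmanRecursion

variable {A Q Γpost Γprior : ℕ → Matrix ι ι ℝ} {H : ∀ k, Matrix (μ k) ι ℝ}
  {R : ∀ k, Matrix (μ k) (μ k) ℝ} {K : ∀ k, Matrix ι (μ k) ℝ}

lemma post_eq (hKF : IsKalmanRecursion A Q H R K Γpost Γprior) (k : ℕ) :
    Γpost (k + 1) = Γprior (k + 1) - Γprior (k + 1) * (H (k + 1))ᵀ *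
      (R (k + 1) + H (k + 1) * Γprior (k + 1) * (H (k + 1))ᵀ)⁻¹ * H (k + 1) * Γprior (k + 1) := by
  rw [hKF.post, hKF.gain]

lemma posDef_prior (hKF : IsKalmanRecursion A Q H R K Γpost Γprior) (hQ : ∀ k, (Q k).PosDef)
    {k : ℕ} (hk : (Γpost k).PosDef) : (Γprior (k + 1)).PosDef := by
  rw [hKF.prior]
  exact Matrix.PosDef.posSemidef_add (hk.posSemidef.mul_mul_transpose_same _) (hQ k)

variable [DecidableEq ι]

lemma posDef_information (hR : ∀ k, (R k).PosDef) {k : ℕ} (hk : (Γprior (k + 1)).PosDef) :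
    ((Γprior (k + 1))⁻¹ + (H (k + 1))ᵀ * (R (k + 1))⁻¹ * H (k + 1)).PosDef :=
  hk.inv.add_posSemidef ((hR _).inv.posSemidef.transpose_mul_mul_same _)

lemma posDef_post (hKF : IsKalmanRecursion A Q H R K Γpost Γprior) (hΓ0 : (Γpost 0).PosDef)
    (hQ : ∀ k, (Q k).PosDef) (hR : ∀ k, (R k).PosDef) : ∀ k, (Γpost k).PosDef
  | 0 => hΓ0
  | k + 1 => by
    have hprior := hKF.posDef_prior hQ (hKF.posDef_post hΓ0 hQ hR k)
    rw [hKF.post_eq, kalman_update_eq_inv hprior (hR _)]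
    exact (posDef_information hR hprior).inv

lemma inv_post (hKF : IsKalmanRecursion A Q H R K Γpost Γprior) (hΓ0 : (Γpost 0).PosDef)
    (hQ : ∀ k, (Q k).PosDef) (hR : ∀ k, (R k).PosDef) (k : ℕ) :
    (Γpost (k + 1))⁻¹ = (Γprior (k + 1))⁻¹ + (H (k + 1))ᵀ * (R (k + 1))⁻¹ * H (k + 1) := by
  have hprior := hKF.posDef_prior hQ (hKF.posDef_post hΓ0 hQ hR k)
  rw [hKF.post_eq, kalman_update_eq_inv hprior (hR _), (posDef_information hR hprior).inv_inv]

lemma post_le (hKF : IsKalmanRecursion A Q H R K Γpost Γprior) (hΓ0 : (Γpost 0).PosDef)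
    (hQ : ∀ k, (Q k).PosDef) (hR : ∀ k, (R k).PosDef) {q : ℝ} (hQq : ∀ k, Q k ≤ q • 1) (k : ℕ) :
    Γpost (k + 1) ≤ A k * Γpost k * (A k)ᵀ + q • 1 := by
  have hprior := hKF.posDef_prior hQ (hKF.posDef_post hΓ0 hQ hR k)
  calc Γpost (k + 1) ≤ Γprior (k + 1) := by
        rw [hKF.post_eq]; exact kalman_update_le hprior.posSemidef (hR _).posSemidef _
    _ ≤ _ := by rw [hKF.prior]; exact add_le_add le_rfl (hQq k)

lemma inv_post_le (hKF : IsKalmanRecursion A Q H R K Γpost Γprior) (hΓ0 : (Γpost 0).PosDef)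
    (hQ : ∀ k, (Q k).PosDef) (hR : ∀ k, (R k).PosDef) {q r : ℝ} (hq : 0 < q) (hr : 0 < r)
    (hQq : ∀ k, q • 1 ≤ Q k) (hRr : ∀ k, r • 1 ≤ R k) (hH : ∀ k, (H k)ᵀ * H k ≤ 1) (k : ℕ) :
    (Γpost (k + 1))⁻¹ ≤ (q⁻¹ + r⁻¹) • (1 : Matrix ι ι ℝ) := by
  have hpost := hKF.posDef_post hΓ0 hQ hR k
  have hprior := hKF.posDef_prior hQ hpost
  have hprior_ge : q • 1 ≤ Γprior (k + 1) := by
    rw [hKF.prior]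
    exact le_add_of_nonneg_of_le (Matrix.nonneg_iff_posSemidef.2
      (hpost.posSemidef.mul_mul_transpose_same _)) (hQq k)
  have hHRH : (H (k + 1))ᵀ * (R (k + 1))⁻¹ * H (k + 1) ≤ r⁻¹ • 1 :=
    calc _ ≤ (H (k + 1))ᵀ * (r⁻¹ • 1) * H (k + 1) :=
          Matrix.transpose_mul_mul_mono ((hR _).inv_le_inv_smul_one hr (hRr _)) _
      _ = r⁻¹ • ((H (k + 1))ᵀ * H (k + 1)) := by simp
      _ ≤ r⁻¹ • 1 := smul_le_smul_of_nonneg_left (hH _) (inv_nonneg.2 hr.le)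
  rw [hKF.inv_post hΓ0 hQ hR, add_smul]
  exact add_le_add (hprior.inv_le_inv_smul_one hq hprior_ge) hHRH

end IsKalmanRecursion

end KalmanRecursion

lemma transpose_mul_self_le_one_of_standingH {m N : ℕ} {H : Matrix (Fin m) (Fin N) ℝ}
    (hH : standingH H) : Hᵀ * H ≤ 1 := by
  obtain ⟨hrows, hinj, -, -⟩ := hH
  choose l hl using hrows
  have hH : ∀ p j, H p j = if j = l p then 1 else 0 := fun p j => congrFun (hl p) j
  have hsub : IsSubstochastic Hᵀ 1 := by
    refine IsSubstochastic.transpose ⟨fun p j => by rw [hH]; positivity, fun p => ?_, fun j => ?_⟩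
    · simp [hH]
    · simp only [hH]
      refine Finset.sum_ite_le_of_subsingleton (fun p p' hp hp' => hinj p p' ?_) zero_le_one
        fun _ _ => le_rfl
      rw [hl, hl, ← hp, ← hp']
  simpa using hsub.mul_transpose_le zero_le_one

section Constants

variable {N : ℕ} {q2 : ℝ} {M : Matrix (Fin N) (Fin N) ℝ}

lemma cTilde1_pos (hM : 0 < matSpectralNorm M) (hq2 : 0 ≤ q2) : 0 < cTilde1 N q2 M := by
  unfold cTilde1
  split_ifs with hN
  · obtain ⟨t, rfl⟩ : ∃ t, N = t + 4 := ⟨N - 4, by omega⟩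
    rw [show 2 * (t + 4) - 5 = 2 * t + 3 by omega, show t + 4 - 3 = t + 1 by omega]
    push_cast
    apply inv_pos.2
    nlinarith [mul_nonneg (sq_nonneg (t : ℝ)) hq2, mul_nonneg (t.cast_nonneg : (0:ℝ) ≤ t) hq2]
  · exact inv_pos.2 hM

lemma le_inv_cTilde1 (hM : 0 ≤ matSpectralNorm M) (hq2 : 0 ≤ q2) {k : ℕ}
    (hk : k < max 1 (N - 2)) :
    matSpectralNorm M * (k + 1) + q2 * k ^ 2 ≤ (cTilde1 N q2 M)⁻¹ := by
  unfold cTilde1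
  split_ifs with hN
  · obtain ⟨t, rfl⟩ : ∃ t, N = t + 4 := ⟨N - 4, by omega⟩
    have hkt : (k : ℝ) ≤ t + 1 := by exact_mod_cast (by omega : k ≤ t + 1)
    rw [show 2 * (t + 4) - 5 = 2 * t + 3 by omega, show t + 4 - 3 = t + 1 by omega, inv_inv]
    push_cast
    have ht : (0 : ℝ) ≤ t := t.cast_nonneg
    have hk0 : (0 : ℝ) ≤ k := k.cast_nonneg
    nlinarith [mul_le_mul hkt hkt hk0 (by linarith), mul_nonneg hM ht, mul_nonneg hq2 ht]
  · obtain rfl : k = 0 := by omega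
    simp

end Constants

theorem stmt2_general
    (n : ℕ) (hn : 2 ≤ n)
    (Δt Δx vm w : ℝ) (hΔt : 0 < Δt) (hΔx : 0 < Δx) (hvm : 0 < vm) (hw : 0 < w)
    (hv1 : vm * Δt / Δx < 1) (hw1 : w * Δt / Δx < 1)
    (q1 q2 r1 r2 : ℝ) (hq0 : 0 < q1) (hq : q1 < q2) (hr0 : 0 < r1)
    (A : ℕ → Matrix (Fin n) (Fin n) ℝ)
    (hA : ∀ k, A k ∈ setAO n (vm * Δt / Δx) (w * Δt / Δx))
    (md : ℕ → ℕ)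
    (H : (k : ℕ) → Matrix (Fin (md k)) (Fin n) ℝ)
    (hH : ∀ k, standingH (H k))
    (Q : ℕ → Matrix (Fin n) (Fin n) ℝ)
    (R : (k : ℕ) → Matrix (Fin (md k)) (Fin (md k)) ℝ)
    (hQ : ∀ k, loewnerLT (q1 • 1) (Q k) ∧ loewnerLT (Q k) (q2 • 1))
    (hR : ∀ k, loewnerLT (r1 • 1) (R k) ∧ loewnerLT (R k) (r2 • 1))
    (Γpost Γprior : ℕ → Matrix (Fin n) (Fin n) ℝ)
    (K : (k : ℕ) → Matrix (Fin n) (Fin (md k)) ℝ)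
    (hΓ0 : (Γpost 0).PosDef)
    (hprior : ∀ k, Γprior (k + 1) = A k * Γpost k * (A k)ᵀ + Q k)
    (hK : ∀ k, K (k + 1) = Γprior (k + 1) * (H (k + 1))ᵀ *
        (R (k + 1) + H (k + 1) * Γprior (k + 1) * (H (k + 1))ᵀ)⁻¹)
    (hpost : ∀ k, Γpost (k + 1) = Γprior (k + 1) - K (k + 1) * H (k + 1) * Γprior (k + 1)) :
    ∀ k, k < max 1 (n - 2) →
      0 < cTilde1 n q2 (Γpost 0) ∧
      loewnerLE ((cTilde1 n q2 (Γpost 0)) • 1) ((Γpost k)⁻¹) ∧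
      loewnerLE ((Γpost k)⁻¹) ((cTilde2 n q1 r1 (Γpost 0)) • 1) := by
  have hq2 : 0 ≤ q2 := (hq0.trans hq).le
  have hmodes k : IsSubstochastic (A k) 2 ∧ ∃ j₀, ∀ j ≠ j₀, ∑ i, A k i j ≤ 1 :=
    isSubstochastic_of_mem_setAO (by positivity) hv1.le (by positivity) hw1.le (by omega) (hA k)
  have hQpd k : (Q k).PosDef := posDef_of_loewnerLT_smul_one hq0.le (hQ k).1
  have hRpd k : (R k).PosDef := posDef_of_loewnerLT_smul_one hr0.le (hR k).1
  have hKF : IsKalmanRecursion A Q H R K Γpost Γprior := ⟨hprior, hK, hpost⟩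
  have hpd := hKF.posDef_post hΓ0 hQpd hRpd
  have hc0 : 0 < matSpectralNorm (Γpost 0) := hΓ0.matSpectralNorm_pos (by omega)
  have hupper : ∀ k, Γpost k ≤ (matSpectralNorm (Γpost 0) * (k + 1) + q2 * k ^ 2) • 1 :=
    le_smul_one_of_lyapunov_le hc0.le hq2 hmodes (le_matSpectralNorm_smul_one hΓ0.isHermitian)
      (hKF.post_le hΓ0 hQpd hRpd fun k => (hQ k).2.posSemidef)
  intro k hk
  refine ⟨cTilde1_pos hc0 hq2, loewnerLE_iff_le.2 ?_, loewnerLE_iff_le.2 ?_⟩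
  · simpa using (hpd k).inv_smul_one_le_inv ((hupper k).trans
      (smul_le_smul_of_nonneg_right (le_inv_cTilde1 hc0.le hq2 hk) zero_le_one))
  · rcases k with _ | k
    · exact hΓ0.inv_le_inv_lamMin_smul_one.trans
        (smul_le_smul_of_nonneg_right (le_max_left _ _) zero_le_one)
    · exact (hKF.inv_post_le hΓ0 hQpd hRpd hq0 hr0 (fun k => (hQ k).1.posSemidef)
        (fun k => (hR k).1.posSemidef) (fun k => transpose_mul_self_le_one_of_standingH (hH k))
        k).trans (smul_le_smul_of_nonneg_right (le_max_right _ _) zero_le_one)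

/-- Lemma 2 / `lem:GammaBound1`: initial-phase bounds
`0 < c̃₁(Γ₀₀)·I ≤ Γ_{k|k}⁻¹ ≤ c̃₂(Γ₀₀)·I` for `0 ≤ k < max{1, n−2}`. -/
theorem stmt2
    (n : ℕ) (hn : 2 ≤ n)
    (Δt Δx vm w : ℝ) (hΔt : 0 < Δt) (hΔx : 0 < Δx) (hvm : 0 < vm) (hw : 0 < w)
    (hv1 : vm * Δt / Δx < 1) (hw1 : w * Δt / Δx < 1)
    (q1 q2 r1 r2 : ℝ) (hq0 : 0 < q1) (hq : q1 < q2) (hr0 : 0 < r1) (hr : r1 < r2)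
    (A : ℕ → Matrix (Fin n) (Fin n) ℝ)
    (hA : ∀ k, A k ∈ setAO n (vm * Δt / Δx) (w * Δt / Δx))
    (md : ℕ → ℕ)
    (H : (k : ℕ) → Matrix (Fin (md k)) (Fin n) ℝ)
    (hH : ∀ k, standingH (H k))
    (Q : ℕ → Matrix (Fin n) (Fin n) ℝ)
    (R : (k : ℕ) → Matrix (Fin (md k)) (Fin (md k)) ℝ)
    (hQ : ∀ k, loewnerLT (q1 • 1) (Q k) ∧ loewnerLT (Q k) (q2 • 1))
    (hR : ∀ k, loewnerLT (r1 • 1) (R k) ∧ loewnerLT (R k) (r2 • 1))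
    (Γpost Γprior : ℕ → Matrix (Fin n) (Fin n) ℝ)
    (K : (k : ℕ) → Matrix (Fin n) (Fin (md k)) ℝ)
    (hΓ0 : (Γpost 0).PosDef)
    (hprior : ∀ k, Γprior (k + 1) = A k * Γpost k * (A k)ᵀ + Q k)
    (hK : ∀ k, K (k + 1) = Γprior (k + 1) * (H (k + 1))ᵀ *
        (R (k + 1) + H (k + 1) * Γprior (k + 1) * (H (k + 1))ᵀ)⁻¹)
    (hpost : ∀ k, Γpost (k + 1) = Γprior (k + 1) - K (k + 1) * H (k + 1) * Γprior (k + 1)) :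
    ∀ k, k < max 1 (n - 2) →
      0 < cTilde1 n q2 (Γpost 0) ∧
      loewnerLE ((cTilde1 n q2 (Γpost 0)) • 1) ((Γpost k)⁻¹) ∧
      loewnerLE ((Γpost k)⁻¹) ((cTilde2 n q1 r1 (Γpost 0)) • 1) :=
  stmt2_general n hn Δt Δx vm w hΔt hΔx hvm hw hv1 hw1 q1 q2 r1 r2 hq0 hq hr0 A hA md H hH Q R hQ hR
    Γpost Γprior K hΓ0 hprior hK hpost

end
end

section
/- Let n ≥ 2 and let ρ̂ : ℕ → ℝ^n be a sequence of mean estimates such that: (i) for every k and every interior cell l ∈ {2,…,n−1}, ρ̂^l_{k+1} = ρ̂^l_k + (Δt/Δx)·(𝔣(ρ̂^{l−1}_k, ρ̂^l_k) − 𝔣(ρ̂^l_k, ρ̂^{l+1}_k)) + δ^l_k, where the correction terms satisfy |δ^l_k| ≤ c̄·max{|η^1_k|, |η^n_k|} for a fixed constant c̄ ≥ 0; and (ii) the boundary errors η^1_k = ρ̂^1_k − ρ^1_k and η^n_k = ρ̂^n_k − ρ^n_k, where ρ^1_k, ρ^n_k ∈ [0, ϱ_m] are the true boundary densities, converge to 0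 as k → ∞. Then for every ε > 0 there exists a finite time T(ε) such that ρ̂^l_k ∈ [−ε, ϱ_m + ε] for all k > T(ε) and all l ∈ {1,…,n}. -/
open Filter

noncomputable section

/-- Godunov numerical flux for the triangular fundamental diagram:
`𝔣(a,b) = min{v_m·a, w·(ϱ_m − b), q_m}`. -/
def gflux (vm w ϱm qm a b : ℝ) : ℝ := min (vm * a) (min (w * (ϱm - b)) qm)

/-- Scalar geometric decay with constant input. -/
lemma stmt7_decay (θ c ε : ℝ) (hθ0 : 0 ≤ θ) (hθ1 : θ < 1) (hc : 0 ≤ c)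
    (hε : 0 < ε) (x : ℕ → ℝ) (K : ℕ)
    (hrec : ∀ k, K ≤ k → x (k + 1) ≤ θ * x k + c) :
    ∃ T : ℕ, ∀ k, T < k → x k ≤ c / (1 - θ) + ε := by
  have h1θ : 0 < 1 - θ := by linarith
  have hbound : ∀ j : ℕ, x (K + j) ≤ θ ^ j * x K + c / (1 - θ) := by
    intro j
    induction j with
    | zero =>
      simp only [Nat.add_zero, pow_zero, one_mul]
      have : 0 ≤ c / (1 - θ) := div_nonneg hc h1θ.le
      linarith
    | succ j ih =>
      have h2 := hrec (K + j) (Nat.le_add_right _ _)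
      have h3 : θ * x (K + j) ≤ θ * (θ ^ j * x K + c / (1 - θ)) :=
        mul_le_mul_of_nonneg_left ih hθ0
      have h4 : θ * (c / (1 - θ)) + c = c / (1 - θ) := by
        field_simp
        ring
      calc x (K + (j + 1)) = x ((K + j) + 1) := by ring_nf
        _ ≤ θ * x (K + j) + c := h2
        _ ≤ θ * (θ ^ j * x K + c / (1 - θ)) + c := by linarith
        _ = θ ^ (j + 1) * x K + (θ * (c / (1 - θ)) + c) := by ring
        _ = θ ^ (j + 1) * x K + c / (1 - θ) := by rw [h4]
  have htend : Tendsto (fun j : ℕ => θ ^ j * x K) atTop (nhds 0) := by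
    have := tendsto_pow_atTop_nhds_zero_of_lt_one hθ0 hθ1
    simpa using this.mul_const (x K)
  obtain ⟨J, hJ⟩ := (eventually_atTop).mp (htend.eventually (eventually_le_nhds hε))
  refine ⟨K + J, fun k hk => ?_⟩
  have hkK : K ≤ k := by omega
  have hkeq : k = K + (k - K) := by omega
  rw [hkeq]
  have hJ' : θ ^ (k - K) * x K ≤ ε := hJ _ (by omega)
  have := hbound (k - K)
  linarith

/-- Contraction step with vanishing inputs. -/
lemma stmt7_contract (μ cb : ℝ) (hμ0 : 0 < μ) (hμ1 : μ < 1) (hcb : 0 ≤ cb)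
    (x y e : ℕ → ℝ)
    (hrec : ∀ k, x (k + 1) ≤ (1 - μ) * x k + (μ * y k + cb * e k))
    (hy : ∀ ε > 0, ∃ T : ℕ, ∀ k, T < k → y k ≤ ε)
    (he : ∀ δ > 0, ∃ T : ℕ, ∀ k, T < k → e k ≤ δ) :
    ∀ ε > 0, ∃ T : ℕ, ∀ k, T < k → x k ≤ ε := by
  intro ε hε
  have hδ : 0 < μ * ε / (4 * (cb + 1)) := by positivity
  obtain ⟨T₁, hT₁⟩ := hy (ε / 4) (by positivity)
  obtain ⟨T₂, hT₂⟩ := he (μ * ε / (4 * (cb + 1))) hδ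
  set δ := μ * ε / (4 * (cb + 1)) with hδdef
  set c := μ * (ε / 4) + cb * δ with hcdef
  have hc0 : 0 ≤ c := by positivity
  have hrec' : ∀ k, max T₁ T₂ + 1 ≤ k → x (k + 1) ≤ (1 - μ) * x k + c := by
    intro k hk
    have h1 : y k ≤ ε / 4 := hT₁ k (by omega)
    have h2 : e k ≤ δ := hT₂ k (by omega)
    have h3 := hrec k
    rw [hcdef]
    nlinarith
  obtain ⟨T, hT⟩ := stmt7_decay (1 - μ) c (ε / 2) (by linarith) (by linarith) hc0
    (by positivity) x _ hrec'
  refine ⟨T, fun k hk => ?_⟩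
  have h3 := hT k hk
  have h4 : c / (1 - (1 - μ)) ≤ ε / 2 := by
    have h5 : (1 : ℝ) - (1 - μ) = μ := by ring
    rw [h5, div_le_iff₀ hμ0, hcdef]
    have h6 : cb * δ ≤ (cb + 1) * δ := by nlinarith [hδ.le]
    have h7 : (cb + 1) * δ = μ * ε / 4 := by
      rw [hδdef]; field_simp
    nlinarith
  linarith

/-- Upper excess estimate for the Godunov update. -/
lemma stmt7_upper (ϱm ϱc vm w qm L : ℝ) (hϱc : 0 < ϱc) (hϱ : ϱc < ϱm)
    (hvm : 0 < vm) (hw : 0 < w) (hqm : qm = vm * ϱc)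
    (hL : 0 < L) (hLv : L * vm ≤ 1) (hLw : L * w ≤ 1) (a b c : ℝ) :
    b + L * (gflux vm w ϱm qm a b - gflux vm w ϱm qm b c) - ϱm ≤
      (1 - L * w) * max (b - ϱm) 0 + L * w * max (c - ϱm) 0 := by
  have hub : b - ϱm ≤ max (b - ϱm) 0 := le_max_left _ _
  have hub0 : (0:ℝ) ≤ max (b - ϱm) 0 := le_max_right _ _
  have huc : c - ϱm ≤ max (c - ϱm) 0 := le_max_left _ _
  have huc0 : (0:ℝ) ≤ max (c - ϱm) 0 := le_max_right _ _
  have hf1a : gflux vm w ϱm qm a b ≤ w * (ϱm - b) :=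
    le_trans (min_le_right _ _) (min_le_left _ _)
  have hf1q : gflux vm w ϱm qm a b ≤ qm :=
    le_trans (min_le_right _ _) (min_le_right _ _)
  rcases le_or_gt (vm * b) (min (w * (ϱm - c)) qm) with h | h
  · have hf2 : gflux vm w ϱm qm b c = vm * b := min_eq_left h
    rw [hf2]
    rcases le_or_gt b 0 with hb | hb
    · nlinarith [mul_le_mul_of_nonneg_left hf1q hL.le,
        mul_nonneg (sub_nonneg.2 hLw) hub0,
        mul_nonneg (mul_nonneg hL.le hw.le) huc0,
        mul_nonneg (neg_nonneg.2 hb) (sub_nonneg.2 hLv),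
        mul_le_mul_of_nonneg_right hLv hϱc.le]
    · nlinarith [mul_le_mul_of_nonneg_left hf1a hL.le,
        mul_le_mul_of_nonneg_left hub (sub_nonneg.2 hLw),
        mul_nonneg (mul_nonneg hL.le hvm.le) hb.le,
        mul_nonneg (mul_nonneg hL.le hw.le) huc0]
  · have hf2 : gflux vm w ϱm qm b c = min (w * (ϱm - c)) qm := min_eq_right h.le
    have hlow : -(w * max (c - ϱm) 0) ≤ gflux vm w ϱm qm b c := by
      rw [hf2]
      refine le_min ?_ ?_
      · nlinarith [mul_le_mul_of_nonneg_left huc hw.le]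
      · nlinarith [mul_nonneg hw.le huc0]
    nlinarith [mul_le_mul_of_nonneg_left hf1a hL.le,
      mul_le_mul_of_nonneg_left hlow hL.le,
      mul_le_mul_of_nonneg_left hub (sub_nonneg.2 hLw)]

/-- Lower excess estimate for the Godunov update. -/
lemma stmt7_lower (ϱm ϱc vm w qm L : ℝ) (hϱc : 0 < ϱc) (hϱ : ϱc < ϱm)
    (hvm : 0 < vm) (hw : 0 < w) (hqm : qm = vm * ϱc)
    (hL : 0 < L) (hLv : L * vm ≤ 1) (hLw : L * w ≤ 1) (a b c : ℝ) :
    -(b + L * (gflux vm w ϱm qm a b - gflux vm w ϱm qm b c)) ≤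
      (1 - L * vm) * max (-b) 0 + L * vm * max (-a) 0 := by
  have hdb : -b ≤ max (-b) 0 := le_max_left _ _
  have hdb0 : (0:ℝ) ≤ max (-b) 0 := le_max_right _ _
  have hda : -a ≤ max (-a) 0 := le_max_left _ _
  have hda0 : (0:ℝ) ≤ max (-a) 0 := le_max_right _ _
  have hf2b : gflux vm w ϱm qm b c ≤ vm * b := min_le_left _ _
  have hf2q : gflux vm w ϱm qm b c ≤ qm :=
    le_trans (min_le_right _ _) (min_le_right _ _)
  rcases le_or_gt (vm * a) (min (w * (ϱm - b)) qm) with h | h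
  · have hf1 : gflux vm w ϱm qm a b = vm * a := min_eq_left h
    rw [hf1]
    nlinarith [mul_le_mul_of_nonneg_left hf2b hL.le,
      mul_le_mul_of_nonneg_left hdb (sub_nonneg.2 hLv),
      mul_le_mul_of_nonneg_left hda (mul_nonneg hL.le hvm.le)]
  · have hf1 : gflux vm w ϱm qm a b = min (w * (ϱm - b)) qm := min_eq_right h.le
    rw [hf1]
    rcases le_or_gt b ϱm with hb | hb
    · have hS : (0:ℝ) ≤ min (w * (ϱm - b)) qm := by
        refine le_min ?_ ?_
        · exact mul_nonneg hw.le (sub_nonneg.2 hb)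
        · nlinarith
      nlinarith [mul_le_mul_of_nonneg_left hf2b hL.le,
        mul_le_mul_of_nonneg_left hdb (sub_nonneg.2 hLv),
        mul_nonneg hL.le hS,
        mul_nonneg (mul_nonneg hL.le hvm.le) hda0]
    · have hS : min (w * (ϱm - b)) qm = w * (ϱm - b) :=
        min_eq_left (by nlinarith [mul_pos hw (sub_pos.2 hb)])
      rw [hS]
      nlinarith [mul_le_mul_of_nonneg_left hf2q hL.le,
        mul_le_mul_of_nonneg_left hb.le (sub_nonneg.2 hLw),
        mul_le_mul_of_nonneg_right hLv hϱc.le,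
        mul_nonneg (sub_nonneg.2 hLv) hdb0,
        mul_nonneg (mul_nonneg hL.le hvm.le) hda0]

/-- Proposition 2 / `Prop:UltimateBoundedness`: if the boundary
estimation errors converge to zero, the mean estimates of all cells are
ultimately bounded inside `[−ε, ϱ_m + ε]` for every `ε > 0`. -/
theorem stmt7
    (n : ℕ) (hn : 2 ≤ n)
    (ϱm ϱc vm w qm : ℝ) (hϱc : 0 < ϱc) (hϱ : ϱc < ϱm) (hvm : 0 < vm)
    (hwdef : w = ϱc * vm / (ϱm - ϱc)) (hqm : qm = vm * ϱc)
    (Δt Δx : ℝ) (hΔt : 0 < Δt) (hΔx : 0 < Δx)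
    (hv1 : vm * Δt / Δx < 1) (hw1 : w * Δt / Δx < 1)
    (ρhat ρtrue : ℕ → ℕ → ℝ)
    (cbar : ℝ) (hcbar : 0 ≤ cbar)
    (hupdate : ∀ k l, 1 ≤ l → l ≤ n - 2 →
      |ρhat (k + 1) l - (ρhat k l + Δt / Δx *
          (gflux vm w ϱm qm (ρhat k (l - 1)) (ρhat k l) -
            gflux vm w ϱm qm (ρhat k l) (ρhat k (l + 1))))| ≤
        cbar * max |ρhat k 0 - ρtrue k 0| |ρhat k (n - 1) - ρtrue k (n - 1)|)
    (htrue1 : ∀ k, ρtrue k 0 ∈ Set.Icc 0 ϱm)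
    (htruen : ∀ k, ρtrue k (n - 1) ∈ Set.Icc 0 ϱm)
    (hconv1 : Tendsto (fun k => ρhat k 0 - ρtrue k 0) atTop (nhds 0))
    (hconvn : Tendsto (fun k => ρhat k (n - 1) - ρtrue k (n - 1)) atTop (nhds 0)) :
    ∀ ε > 0, ∃ T : ℕ, ∀ k, T < k → ∀ l, l < n → ρhat k l ∈ Set.Icc (-ε) (ϱm + ε) := by
  -- basic parameter facts
  have hL : 0 < Δt / Δx := div_pos hΔt hΔx
  have hw : 0 < w := by
    rw [hwdef]; exact div_pos (mul_pos hϱc hvm) (sub_pos.2 hϱ)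
  have hLv : Δt / Δx * vm < 1 := by
    have h : Δt / Δx * vm = vm * Δt / Δx := by ring
    rw [h]; exact hv1
  have hLw : Δt / Δx * w < 1 := by
    have h : Δt / Δx * w = w * Δt / Δx := by ring
    rw [h]; exact hw1
  have hLv0 : 0 < Δt / Δx * vm := mul_pos hL hvm
  have hLw0 : 0 < Δt / Δx * w := mul_pos hL hw
  -- the boundary error sequence
  set E : ℕ → ℝ :=
    fun k => max |ρhat k 0 - ρtrue k 0| |ρhat k (n - 1) - ρtrue k (n - 1)| with hE
  have hE0 : ∀ k, 0 ≤ E k := by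
    intro k; rw [hE]
    exact le_trans (abs_nonneg _) (le_max_left _ _)
  have hesmall : ∀ δ > (0:ℝ), ∃ T : ℕ, ∀ k, T < k → E k ≤ δ := by
    intro δ hδ
    have h1 : Tendsto E atTop (nhds 0) := by
      rw [hE]
      have h2 := hconv1.abs.max hconvn.abs
      simpa using h2
    obtain ⟨T, hT⟩ := (eventually_atTop).mp (h1.eventually (eventually_le_nhds hδ))
    exact ⟨T, fun k hk => hT k hk.le⟩
  -- boundary cells stay close to [0, ϱm]
  have hu0 : ∀ k, max (ρhat k 0 - ϱm) 0 ≤ E k := by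
    intro k
    have h1 := (htrue1 k).2
    have h2 := le_abs_self (ρhat k 0 - ρtrue k 0)
    have h3 : |ρhat k 0 - ρtrue k 0| ≤ E k := by
      rw [hE]; exact le_max_left _ _
    refine max_le (by linarith) ((hE0 k))
  have hun : ∀ k, max (ρhat k (n - 1) - ϱm) 0 ≤ E k := by
    intro k
    have h1 := (htruen k).2
    have h2 := le_abs_self (ρhat k (n - 1) - ρtrue k (n - 1))
    have h3 : |ρhat k (n - 1) - ρtrue k (n - 1)| ≤ E k := by
      rw [hE]; exact le_max_right _ _
    refine max_le (by linarith) ((hE0 k))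
  have hd0 : ∀ k, max (-ρhat k 0) 0 ≤ E k := by
    intro k
    have h1 := (htrue1 k).1
    have h2 := neg_le_abs (ρhat k 0 - ρtrue k 0)
    have h3 : |ρhat k 0 - ρtrue k 0| ≤ E k := by
      rw [hE]; exact le_max_left _ _
    refine max_le (by linarith) ((hE0 k))
  have hdn : ∀ k, max (-ρhat k (n - 1)) 0 ≤ E k := by
    intro k
    have h1 := (htruen k).1
    have h2 := neg_le_abs (ρhat k (n - 1) - ρtrue k (n - 1))
    have h3 : |ρhat k (n - 1) - ρtrue k (n - 1)| ≤ E k := by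
      rw [hE]; exact le_max_right _ _
    refine max_le (by linarith) ((hE0 k))
  have hbound_cell : ∀ x : ℕ → ℝ, (∀ k, x k ≤ E k) →
      ∀ ε > (0:ℝ), ∃ T : ℕ, ∀ k, T < k → x k ≤ ε := by
    intro x hx ε hε
    obtain ⟨T, hT⟩ := hesmall ε hε
    exact ⟨T, fun k hk => (hx k).trans (hT k hk)⟩
  -- the update hypothesis, rewritten
  have hupd : ∀ k l, 1 ≤ l → l ≤ n - 2 →
      |ρhat (k + 1) l - (ρhat k l + Δt / Δx *
          (gflux vm w ϱm qm (ρhat k (l - 1)) (ρhat k l) -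
            gflux vm w ϱm qm (ρhat k l) (ρhat k (l + 1))))| ≤ cbar * E k := by
    intro k l h1 h2
    rw [hE]
    exact hupdate k l h1 h2
  -- interior recursions for the excesses
  have hu_rec : ∀ k l, 1 ≤ l → l ≤ n - 2 →
      max (ρhat (k + 1) l - ϱm) 0 ≤
        (1 - Δt / Δx * w) * max (ρhat k l - ϱm) 0 +
          (Δt / Δx * w * max (ρhat k (l + 1) - ϱm) 0 + cbar * E k) := by
    intro k l h1 h2
    have hup := (abs_le.mp (hupd k l h1 h2)).2
    have hupper := stmt7_upper ϱm ϱc vm w qm (Δt / Δx) hϱc hϱ hvm hw hqm hL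
      hLv.le hLw.le (ρhat k (l - 1)) (ρhat k l) (ρhat k (l + 1))
    have hr1 : (0:ℝ) ≤ (1 - Δt / Δx * w) * max (ρhat k l - ϱm) 0 :=
      mul_nonneg (by linarith) (le_max_right _ _)
    have hr2 : (0:ℝ) ≤ Δt / Δx * w * max (ρhat k (l + 1) - ϱm) 0 :=
      mul_nonneg hLw0.le (le_max_right _ _)
    have hr3 : (0:ℝ) ≤ cbar * E k := mul_nonneg hcbar (hE0 k)
    refine max_le (by linarith) (by linarith)
  have hd_rec : ∀ k l, 1 ≤ l → l ≤ n - 2 →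
      max (-ρhat (k + 1) l) 0 ≤
        (1 - Δt / Δx * vm) * max (-ρhat k l) 0 +
          (Δt / Δx * vm * max (-ρhat k (l - 1)) 0 + cbar * E k) := by
    intro k l h1 h2
    have hup := (abs_le.mp (hupd k l h1 h2)).1
    have hlower := stmt7_lower ϱm ϱc vm w qm (Δt / Δx) hϱc hϱ hvm hw hqm hL
      hLv.le hLw.le (ρhat k (l - 1)) (ρhat k l) (ρhat k (l + 1))
    have hr1 : (0:ℝ) ≤ (1 - Δt / Δx * vm) * max (-ρhat k l) 0 :=
      mul_nonneg (by linarith) (le_max_right _ _)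
    have hr2 : (0:ℝ) ≤ Δt / Δx * vm * max (-ρhat k (l - 1)) 0 :=
      mul_nonneg hLv0.le (le_max_right _ _)
    have hr3 : (0:ℝ) ≤ cbar * E k := mul_nonneg hcbar (hE0 k)
    refine max_le (by linarith) (by linarith)
  -- upper excess of every cell tends to zero (induction from the right boundary)
  have main_u : ∀ j l, l + j = n - 1 →
      ∀ ε > (0:ℝ), ∃ T : ℕ, ∀ k, T < k → max (ρhat k l - ϱm) 0 ≤ ε := by
    intro j
    induction j with
    | zero =>
      intro l hl
      have hl' : l = n - 1 := by omega
      subst hl'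
      exact hbound_cell _ hun
    | succ j ih =>
      intro l hl
      rcases Nat.eq_zero_or_pos l with h0 | h1
      · subst h0
        exact hbound_cell _ hu0
      · have hle : l ≤ n - 2 := by omega
        have hl1 : (l + 1) + j = n - 1 := by omega
        exact stmt7_contract (Δt / Δx * w) cbar hLw0 hLw hcbar
          (fun k => max (ρhat k l - ϱm) 0)
          (fun k => max (ρhat k (l + 1) - ϱm) 0) E
          (fun k => hu_rec k l h1 hle) (ih (l + 1) hl1) hesmall
  -- lower excess of every cell tends to zero (induction from the left boundary)
  have main_d : ∀ l, l ≤ n - 1 →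
      ∀ ε > (0:ℝ), ∃ T : ℕ, ∀ k, T < k → max (-ρhat k l) 0 ≤ ε := by
    intro l
    induction l with
    | zero =>
      intro _
      exact hbound_cell _ hd0
    | succ l ih =>
      intro hl
      rcases eq_or_lt_of_le hl with heq | hlt
      · rw [heq]
        exact hbound_cell _ hdn
      · have h1 : 1 ≤ l + 1 := by omega
        have h2 : l + 1 ≤ n - 2 := by omega
        have hrec : ∀ k, max (-ρhat (k + 1) (l + 1)) 0 ≤
            (1 - Δt / Δx * vm) * max (-ρhat k (l + 1)) 0 +
              (Δt / Δx * vm * max (-ρhat k l) 0 + cbar * E k) := by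
          intro k
          have h3 := hd_rec k (l + 1) h1 h2
          simpa using h3
        exact stmt7_contract (Δt / Δx * vm) cbar hLv0 hLv hcbar
          (fun k => max (-ρhat k (l + 1)) 0)
          (fun k => max (-ρhat k l) 0) E
          hrec (ih (by omega)) hesmall
  -- conclusion
  intro ε hε
  have hall : ∀ l : ℕ, ∃ T : ℕ, ∀ k, T < k → l < n →
      ρhat k l ∈ Set.Icc (-ε) (ϱm + ε) := by
    intro l
    by_cases hl : l < n
    · obtain ⟨Tu, hTu⟩ := main_u (n - 1 - l) l (by omega) ε hε
      obtain ⟨Td, hTd⟩ := main_d l (by omega) ε hε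
      refine ⟨max Tu Td, fun k hk _ => ?_⟩
      have h1 := hTu k (lt_of_le_of_lt (le_max_left _ _) hk)
      have h2 := hTd k (lt_of_le_of_lt (le_max_right _ _) hk)
      have h3 := le_max_left (ρhat k l - ϱm) (0:ℝ)
      have h4 := le_max_left (-ρhat k l) (0:ℝ)
      exact Set.mem_Icc.mpr ⟨by linarith, by linarith⟩
    · exact ⟨0, fun k _ hln => absurd hln hl⟩
  choose Tf hTf using hall
  refine ⟨(Finset.range n).sup Tf, fun k hk l hl => ?_⟩
  exact hTf l k (lt_of_le_of_lt (Finset.le_sup (Finset.mem_range.mpr hl)) hk) hl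

end
end

section
/- Assume the alternating-interval hypotheses (U), (O), (B) and the residence-time condition (T) stated in the context. Then for every r ≥ 2: (a) ‖η(k)‖ ≤ E_r for all k with k̲U^r < k ≤ k̄U^r; and (b) ‖η(k)‖ ≤ max{ ĉ + 𝔞_r𝔮_r·E_r, ĉ + ĉ𝔞_r𝔮_r/(1−𝔮_r) } for all k with k̲O^r < k ≤ k̄O^r. -/
noncomputable section

lemma euclNorm_nonneg' {N : ℕ} (v : Fin N → ℝ) : 0 ≤ euclNorm v := Real.sqrt_nonneg _

lemma pow_pred_mul' {q : ℝ} {m : ℕ} (hm : 1 ≤ m) : q ^ m = q ^ (m - 1) * q := by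
  conv_lhs => rw [show m = (m - 1) + 1 by omega]
  rw [pow_succ]

lemma algA' {q a chat E : ℝ} (hq0 : 0 < q) (hq1 : q < 1) (ha : 0 < a)
    (hE : E ≤ chat / (1 - q)) {m : ℕ} (hm : 1 ≤ m) :
    a * q ^ m * E + chat * a * q * (1 - q ^ (m - 1)) / (1 - q) ≤ chat * a * q / (1 - q) := by
  have h1q : 0 < 1 - q := by linarith
  have hqm : 0 < q ^ m := pow_pos hq0 m
  have e : chat * a * q * (1 - q ^ (m - 1)) / (1 - q)
      = chat * a * q / (1 - q) - q ^ m * (chat * a / (1 - q)) := by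
    rw [pow_pred_mul' hm]; ring
  have h1 : a * q ^ m * E ≤ a * q ^ m * (chat / (1 - q)) :=
    mul_le_mul_of_nonneg_left hE (by positivity)
  have h2 : a * q ^ m * (chat / (1 - q)) = q ^ m * (chat * a / (1 - q)) := by ring
  linarith

lemma alg1' {q a chat E : ℝ} (hq0 : 0 < q) (hq1 : q < 1) (ha : 0 < a)
    {m : ℕ} (hm : 1 ≤ m) :
    chat + a * q ^ m * E + chat * a * q * (1 - q ^ (m - 1)) / (1 - q)
      ≤ max (chat + a * q * E) (chat + chat * a * q / (1 - q)) := by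
  have h1q : 0 < 1 - q := by linarith
  by_cases hcase : E ≤ chat / (1 - q)
  · exact le_max_of_le_right (by linarith [algA' hq0 hq1 ha hcase hm])
  · push_neg at hcase
    refine le_max_of_le_left ?_
    have hqm : q ^ m ≤ q := by
      calc q ^ m ≤ q ^ 1 := pow_le_pow_of_le_one hq0.le hq1.le hm
        _ = q := pow_one q
    have e2 : chat * a * q * (1 - q ^ (m - 1)) / (1 - q)
        = chat * a * q / (1 - q) - q ^ m * (chat * a / (1 - q)) := by
      rw [pow_pred_mul' hm]; ring
    have h4 : a * (chat / (1 - q)) ≤ a * E := mul_le_mul_of_nonneg_left hcase.le ha.le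
    have h5 : a * (chat / (1 - q)) = chat * a / (1 - q) := by ring
    have hpos : 0 ≤ a * E - chat * a / (1 - q) := by linarith
    have h3 := mul_le_mul_of_nonneg_right hqm hpos
    have i1 : q ^ m * (a * E - chat * a / (1 - q))
        = a * q ^ m * E - q ^ m * (chat * a / (1 - q)) := by ring
    have i2 : q * (a * E - chat * a / (1 - q)) = a * q * E - chat * a * q / (1 - q) := by ring
    linarith


/-- Proposition 5 / `prop:switch`, case `r ≥ 2`: under the
alternating-interval hypotheses (U), (O), (B) and the residence-time condition (T),
the mean estimation error is bounded by `E_r` on the `r`-th unobservable interval and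
by an explicit maximum on the `r`-th observable interval.

The time axis is `0 = k̲U¹ < k̄U¹ = k̲O¹ < k̄O¹ = k̲U² < ⋯`, encoded by a strictly
monotone `t : ℕ → ℕ` with `t 0 = 0`; `k̲U^r = t (2r−2)`, `k̄U^r = k̲O^r = t (2r−1)`,
`k̄O^r = t (2r)`. -/
theorem stmt11
    (n : ℕ) (hn : 2 ≤ n)
    (ϱm : ℝ) (hϱm : 0 < ϱm)
    (chat : ℝ) (hchat : 0 ≤ chat)
    (c0 : ℝ) (hc0 : 1 ≤ c0)
    (δ : ℝ) (hδ : 0 < δ)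
    (η : ℕ → Fin n → ℝ)
    (t : ℕ → ℕ) (ht0 : t 0 = 0) (htmono : StrictMono t)
    (a q c : ℕ → ℝ)
    (ha : ∀ r, 1 ≤ r → 1 ≤ a r)
    (hq : ∀ r, 1 ≤ r → 0 < q r ∧ q r < 1)
    (hc : ∀ r, 1 ≤ r → 0 ≤ c r)
    (E : ℕ → ℝ)
    (hE1 : E 1 = Real.sqrt n * (Real.sqrt n * ϱm * (c0 + ((n : ℝ) - 2) * c 1) + ϱm))
    (hEr : ∀ r, 2 ≤ r → E r = Real.sqrt n * (ϱm +
      (δ + chat + chat * a (r - 1) * q (r - 1) / (1 - q (r - 1))) *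
        (c0 + ((n : ℝ) - 2) * c r)))
    -- hypothesis (U)
    (hU : ∀ r, 1 ≤ r → ∀ ε : ℝ, 0 < ε → euclNorm (η (t (2 * r - 2))) ≤ ε →
      ∀ k, t (2 * r - 2) < k → k ≤ t (2 * r - 1) →
        euclNorm (η k) ≤ Real.sqrt n * (ϱm + ε * (c0 + ((n : ℝ) - 2) * c r)))
    -- hypothesis (O)
    (hO : ∀ r, 1 ≤ r → ∀ k, t (2 * r - 1) < k → k ≤ t (2 * r) →
      euclNorm (η k) ≤ chat +
        a r * (q r) ^ (k - t (2 * r - 1)) * euclNorm (η (t (2 * r - 1))) +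
        chat * a r * q r * (1 - (q r) ^ (k - t (2 * r - 1) - 1)) / (1 - q r))
    -- hypothesis (B)
    (hB : euclNorm (η 0) ≤ Real.sqrt n * ϱm)
    -- hypothesis (T): residence time in observable intervals
    (hT : ∀ r, 1 ≤ r →
      ((t (2 * r) - t (2 * r - 1) : ℕ) : ℝ) >
        (if a r * q r * E r ≤ chat * a r * q r / (1 - q r) then 0
         else Real.log (δ * (a r * E r - chat * a r / (1 - q r))⁻¹) / Real.log (q r))) :
    ∀ r, 2 ≤ r →
      (∀ k, t (2 * r - 2) < k → k ≤ t (2 * r - 1) → euclNorm (η k) ≤ E r) ∧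
      (∀ k, t (2 * r - 1) < k → k ≤ t (2 * r) →
        euclNorm (η k) ≤ max (chat + a r * q r * E r)
          (chat + chat * a r * q r / (1 - q r))) := by
  have hn0 : (0:ℝ) < (n:ℝ) := by exact_mod_cast (by omega : 0 < n)
  have hsn : 0 < Real.sqrt n := Real.sqrt_pos.mpr hn0
  -- workhorse lemma
  have main : ∀ r, 1 ≤ r → ∀ e : ℝ, 0 < e →
      E r = Real.sqrt n * (ϱm + e * (c0 + ((n : ℝ) - 2) * c r)) →
      euclNorm (η (t (2 * r - 2))) ≤ e →
      (∀ k, t (2 * r - 2) < k → k ≤ t (2 * r - 1) → euclNorm (η k) ≤ E r) ∧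
      (∀ k, t (2 * r - 1) < k → k ≤ t (2 * r) →
        euclNorm (η k) ≤ max (chat + a r * q r * E r)
          (chat + chat * a r * q r / (1 - q r))) ∧
      euclNorm (η (t (2 * r))) ≤ δ + chat + chat * a r * q r / (1 - q r) := by
    intro r hr e he hEe hstart
    obtain ⟨hq0, hq1⟩ := hq r hr
    have ha1 := ha r hr
    have ha0 : 0 < a r := lt_of_lt_of_le zero_lt_one ha1
    have h1q : 0 < 1 - q r := by linarith
    have hA : ∀ k, t (2 * r - 2) < k → k ≤ t (2 * r - 1) → euclNorm (η k) ≤ E r := by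
      intro k hk1 hk2
      rw [hEe]
      exact hU r hr e he hstart k hk1 hk2
    have hend : euclNorm (η (t (2 * r - 1))) ≤ E r :=
      hA _ (htmono (by omega)) le_rfl
    have hE0 : 0 ≤ E r := le_trans (euclNorm_nonneg' _) hend
    have hOb : ∀ k, t (2 * r - 1) < k → k ≤ t (2 * r) →
        euclNorm (η k) ≤ chat + a r * (q r) ^ (k - t (2 * r - 1)) * E r +
          chat * a r * q r * (1 - (q r) ^ (k - t (2 * r - 1) - 1)) / (1 - q r) := by
      intro k hk1 hk2
      have h := hO r hr k hk1 hk2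
      have h2 : a r * (q r) ^ (k - t (2 * r - 1)) * euclNorm (η (t (2 * r - 1)))
          ≤ a r * (q r) ^ (k - t (2 * r - 1)) * E r :=
        mul_le_mul_of_nonneg_left hend (by positivity)
      linarith
    refine ⟨hA, ?_, ?_⟩
    · intro k hk1 hk2
      have hm : 1 ≤ k - t (2 * r - 1) := by omega
      exact le_trans (hOb k hk1 hk2) (alg1' hq0 hq1 ha0 hm)
    · -- endpoint bound
      have hTr := hT r hr
      have hlt : t (2 * r - 1) < t (2 * r) := htmono (by omega)
      have hm1 : 1 ≤ t (2 * r) - t (2 * r - 1) := by omega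
      have hb := hOb (t (2 * r)) hlt le_rfl
      set m := t (2 * r) - t (2 * r - 1) with hmdef
      by_cases hcase : a r * q r * E r ≤ chat * a r * q r / (1 - q r)
      · have haq : 0 < a r * q r := by positivity
        have heq : chat * a r * q r / (1 - q r) = (a r * q r) * (chat / (1 - q r)) := by ring
        have hE' : E r ≤ chat / (1 - q r) := by
          have h6 : (a r * q r) * E r ≤ (a r * q r) * (chat / (1 - q r)) := by linarith
          exact le_of_mul_le_mul_left h6 haq
        have := algA' hq0 hq1 ha0 hE' hm1
        linarith
      · rw [if_neg hcase] at hTr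
        push_neg at hcase
        have hD : chat * a r / (1 - q r) < a r * E r := by
          have haq : 0 < a r * q r := by positivity
          have heq : chat * a r * q r / (1 - q r) = (a r * q r) * (chat / (1 - q r)) := by ring
          have h6 : (a r * q r) * (chat / (1 - q r)) < (a r * q r) * E r := by linarith
          have h7 : chat / (1 - q r) < E r := lt_of_mul_lt_mul_left h6 haq.le
          have h8 : a r * (chat / (1 - q r)) < a r * E r :=
            (mul_lt_mul_iff_right₀ ha0).mpr h7
          have h9 : a r * (chat / (1 - q r)) = chat * a r / (1 - q r) := by ring
          linarith
        have hDpos : 0 < a r * E r - chat * a r / (1 - q r) := by linarith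
        have hx : 0 < δ * (a r * E r - chat * a r / (1 - q r))⁻¹ := by positivity
        have hlogq : Real.log (q r) < 0 := Real.log_neg hq0 hq1
        have hmq : (m : ℝ) * Real.log (q r)
            < Real.log (δ * (a r * E r - chat * a r / (1 - q r))⁻¹) :=
          (div_lt_iff_of_neg hlogq).mp hTr
        have hpow : (q r) ^ m < δ * (a r * E r - chat * a r / (1 - q r))⁻¹ := by
          have h1 : Real.log ((q r) ^ m) = (m : ℝ) * Real.log (q r) := by rw [Real.log_pow]
          have h2 : Real.log ((q r) ^ m)
              < Real.log (δ * (a r * E r - chat * a r / (1 - q r))⁻¹) := by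
            rw [h1]; exact hmq
          exact (Real.log_lt_log_iff (pow_pos hq0 m) hx).mp h2
        have hfin : (q r) ^ m * (a r * E r - chat * a r / (1 - q r)) < δ := by
          rw [← div_eq_mul_inv] at hpow
          exact (lt_div_iff₀ hDpos).mp hpow
        have e2 : chat * a r * q r * (1 - (q r) ^ (m - 1)) / (1 - q r)
            = chat * a r * q r / (1 - q r) - (q r) ^ m * (chat * a r / (1 - q r)) := by
          rw [pow_pred_mul' hm1]; ring
        have e3 : (q r) ^ m * (a r * E r - chat * a r / (1 - q r))
            = a r * (q r) ^ m * E r - (q r) ^ m * (chat * a r / (1 - q r)) := by ring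
        linarith
  -- the start bound, by induction
  have start : ∀ r, 2 ≤ r → euclNorm (η (t (2 * r - 2)))
      ≤ δ + chat + chat * a (r - 1) * q (r - 1) / (1 - q (r - 1)) := by
    intro r hr
    induction r, hr using Nat.le_induction with
    | base =>
      have hE1' : E 1 = Real.sqrt n * (ϱm + (Real.sqrt n * ϱm) * (c0 + ((n : ℝ) - 2) * c 1)) := by
        rw [hE1]; ring
      have hstart1 : euclNorm (η (t (2 * 1 - 2))) ≤ Real.sqrt n * ϱm := by
        norm_num [ht0]; exact hB
      have h := (main 1 le_rfl (Real.sqrt n * ϱm) (by positivity) hE1' hstart1).2.2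
      norm_num at h ⊢
      exact h
    | succ r hr ih =>
      have hr1 : 1 ≤ r - 1 := by omega
      obtain ⟨hq0, hq1⟩ := hq (r - 1) hr1
      have ha1 := ha (r - 1) hr1
      have he : 0 < δ + chat + chat * a (r - 1) * q (r - 1) / (1 - q (r - 1)) := by
        have hnum : 0 ≤ chat * a (r - 1) * q (r - 1) :=
          mul_nonneg (mul_nonneg hchat (by linarith)) hq0.le
        have := div_nonneg hnum (by linarith : (0:ℝ) ≤ 1 - q (r - 1))
        linarith
      have h := (main r (by omega) _ he (hEr r hr) ih).2.2
      have ht' : 2 * (r + 1) - 2 = 2 * r := by omega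
      have hr' : r + 1 - 1 = r := by omega
      rw [ht', hr']
      exact h
  intro r hr
  have hr1 : 1 ≤ r - 1 := by omega
  obtain ⟨hq0, hq1⟩ := hq (r - 1) hr1
  have ha1 := ha (r - 1) hr1
  have he : 0 < δ + chat + chat * a (r - 1) * q (r - 1) / (1 - q (r - 1)) := by
    have hnum : 0 ≤ chat * a (r - 1) * q (r - 1) :=
      mul_nonneg (mul_nonneg hchat (by linarith)) hq0.le
    have := div_nonneg hnum (by linarith : (0:ℝ) ≤ 1 - q (r - 1))
    linarith
  have h := main r (by omega) _ he (hEr r hr) (start r hr)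
  exact ⟨h.1, h.2.1⟩


end
end

section
/- For any integer ι ≥ 1 and any matrices M_1,…,M_ι ∈ 𝒜_O, with P = M_ιM_{ι−1}⋯M_1 and θ̃ = min{1−v_m·Δt/Δx, 1−w·Δt/Δx}: det(PP^T) ≥ θ̃^{2ιn}, and the smallest eigenvalue of the positive definite matrix PP^T satisfies σ_min(PP^T) > θ̃^{2ιn} / √(4n·(2ι+1)²·2^{n−2}). -/
open Matrix Filter Finset

noncomputable section

/-- the product `M_b · M_{b−1} ⋯ M_1` (empty product = identity) -/
def prodSeq {N : ℕ} (M : ℕ → Matrix (Fin N) (Fin N) ℝ) : ℕ → Matrix (Fin N) (Fin N) ℝ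
  | 0 => 1
  | b + 1 => M (b + 1) * prodSeq M b

/-- the stacked observability matrix with blocks `H_b, H_b M₁, H_b M₂M₁, …,
H_b M_T⋯M₁` -/
def stackObs (n T : ℕ) (M : ℕ → Matrix (Fin n) (Fin n) ℝ) :
    Matrix (Fin (2 * (T + 1))) (Fin n) ℝ :=
  Matrix.of fun r c =>
    (matHb n * prodSeq M ((r : ℕ) / 2)) ⟨(r : ℕ) % 2, by omega⟩ c

/-! Every matrix of `𝒜_O` is nonnegative with row sums at most one, and after listing the
cells in a suitable order it is triangular with diagonal entries at least `θ̃`. Both properties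
pass to products, so `det P ≥ θ̃ ^ (ι n)`, and every entry of `adj P` is the determinant of a
nonnegative matrix with row sums at most one, hence of absolute value at most one (expand the
determinant and compare with the product of the row sums). Cramer's rule `adj Pᵀ (Pᵀ v) = det P • v`
then gives `(det P)² ‖v‖² ≤ n² ‖Pᵀ v‖²`, i.e. `σ_min (P Pᵀ) ≥ (det P)² / n²`, and
`n⁴ < 4 n (2ι+1)² 2^(n-2)` finishes the proof. -/

namespace Matrix

section BlockTriangular

variable {m α R : Type*} [Fintype m] [DecidableEq m] [LinearOrder α]

theorem BlockTriangular.det_eq_prod_diag_of_injective [CommRing R] {M : Matrix m m R}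
    {b : m → α} (hM : M.BlockTriangular b) (hb : Function.Injective b) :
    M.det = ∏ i, M i i := by
  rw [hM.det, Finset.prod_image hb.injOn]
  refine Finset.prod_congr rfl fun i _ => ?_
  let : Unique {a : m // b a = b i} := ⟨⟨⟨i, rfl⟩⟩, fun a => Subtype.ext (hb a.2)⟩
  exact det_unique (M.toSquareBlock b (b i))

theorem BlockTriangular.pow_card_le_det [CommRing R] [PartialOrder R] [IsOrderedRing R]
    {M : Matrix m m R} {b : m → α} (hM : M.BlockTriangular b) (hb : Function.Injective b)
    {c : R} (hc : 0 ≤ c) (hdiag : ∀ i, c ≤ M i i) : c ^ Fintype.card m ≤ M.det := by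
  rw [hM.det_eq_prod_diag_of_injective hb, ← Finset.card_univ, ← Finset.prod_const]
  exact Finset.prod_le_prod (fun _ _ => hc) fun i _ => hdiag i

end BlockTriangular

section Substochastic

variable {m R : Type*} [Fintype m] [CommRing R] [LinearOrder R] [IsStrictOrderedRing R]

def IsSubstochastic (A : Matrix m m R) : Prop :=
  (∀ i j, 0 ≤ A i j) ∧ ∀ i, ∑ j, A i j ≤ 1

theorem isSubstochastic_one [DecidableEq m] : (1 : Matrix m m R).IsSubstochastic := by
  refine ⟨fun i j => ?_, fun i => ?_⟩
  · rw [one_apply]; split_ifs <;> norm_num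
  · simp [one_apply]

theorem IsSubstochastic.mul {A B : Matrix m m R} (hA : A.IsSubstochastic)
    (hB : B.IsSubstochastic) : (A * B).IsSubstochastic := by
  refine ⟨fun i j => Finset.sum_nonneg fun k _ => mul_nonneg (hA.1 i k) (hB.1 k j),
    fun i => ?_⟩
  calc ∑ j, (A * B) i j = ∑ k, A i k * ∑ j, B k j := by
        simp only [mul_apply, Finset.mul_sum]; exact Finset.sum_comm
    _ ≤ ∑ k, A i k * 1 :=
        Finset.sum_le_sum fun k _ => mul_le_mul_of_nonneg_left (hB.2 k) (hA.1 i k)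
    _ ≤ 1 := by simpa using hA.2 i

theorem abs_det_le_prod_sum_of_nonneg [DecidableEq m] {A : Matrix m m R}
    (hA : ∀ i j, 0 ≤ A i j) : |A.det| ≤ ∏ i, ∑ j, A i j := by
  have hterm : ∀ σ : Equiv.Perm m, |(σ.sign : R) * ∏ i, A i (σ i)| = ∏ i, A i (σ i) := by
    intro σ
    rw [abs_mul, abs_of_nonneg (Finset.prod_nonneg fun i _ => hA i (σ i))]
    rcases Int.units_eq_one_or σ.sign with h | h <;> simp [h]
  let coeFn : Equiv.Perm m ↪ (m → m) := ⟨fun σ => σ, DFunLike.coe_injective⟩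
  calc |A.det| = |∑ σ : Equiv.Perm m, (σ.sign : R) * ∏ i, A i (σ i)| := by
        rw [← det_transpose, det_apply']; rfl
    _ ≤ ∑ σ : Equiv.Perm m, ∏ i, A i (σ i) :=
        (Finset.abs_sum_le_sum_abs _ _).trans_eq (Finset.sum_congr rfl fun σ _ => hterm σ)
    _ = ∑ g ∈ Finset.univ.map coeFn, ∏ i, A i (g i) := by
        rw [Finset.sum_map]; rfl
    _ ≤ ∑ g : m → m, ∏ i, A i (g i) :=
        Finset.sum_le_univ_sum_of_nonneg fun g => Finset.prod_nonneg fun i _ => hA i (g i)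
    _ = ∏ i, ∑ j, A i j := (Fintype.prod_sum fun i j => A i j).symm

theorem IsSubstochastic.abs_det_le_one [DecidableEq m] {A : Matrix m m R}
    (hA : A.IsSubstochastic) : |A.det| ≤ 1 :=
  (abs_det_le_prod_sum_of_nonneg hA.1).trans <|
    Finset.prod_le_one (fun i _ => Finset.sum_nonneg fun j _ => hA.1 i j) fun i _ => hA.2 i

theorem IsSubstochastic.updateRow_single [DecidableEq m] {A : Matrix m m R}
    (hA : A.IsSubstochastic) (i j : m) : (A.updateRow j (Pi.single i 1)).IsSubstochastic := by
  refine ⟨fun a b => ?_, fun a => ?_⟩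
  · rw [updateRow_apply]
    split_ifs
    · rw [Pi.single_apply]; split_ifs <;> norm_num
    · exact hA.1 a b
  · by_cases h : a = j
    · simp [h]
    · simpa only [updateRow_apply, if_neg h] using hA.2 a

theorem IsSubstochastic.abs_adjugate_apply_le_one [DecidableEq m] {A : Matrix m m R}
    (hA : A.IsSubstochastic) (i j : m) : |A.adjugate i j| ≤ 1 := by
  rw [adjugate_apply]
  exact (hA.updateRow_single i j).abs_det_le_one

end Substochastic

section Eigenvalue

variable {m n : Type*} [Fintype m] [Fintype n]

theorem mulVec_dotProduct_mulVec_self_le {A : Matrix m n ℝ} (hA : ∀ i j, |A i j| ≤ 1)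
    (w : n → ℝ) :
    (A *ᵥ w) ⬝ᵥ (A *ᵥ w) ≤ Fintype.card m * Fintype.card n * (w ⬝ᵥ w) := by
  have hrow : ∀ i, ∑ j, A i j ^ 2 ≤ Fintype.card n := fun i => by
    simpa using Finset.sum_le_sum fun j (_ : j ∈ Finset.univ) =>
      (sq_le_one_iff_abs_le_one (A i j)).mpr (hA i j)
  calc (A *ᵥ w) ⬝ᵥ (A *ᵥ w) = ∑ i, (∑ j, A i j * w j) ^ 2 := by
        simp only [dotProduct, mulVec, sq]
    _ ≤ ∑ i, (∑ j, A i j ^ 2) * ∑ j, w j ^ 2 :=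
        Finset.sum_le_sum fun i _ => Finset.sum_mul_sq_le_sq_mul_sq _ _ _
    _ ≤ ∑ _i : m, (Fintype.card n : ℝ) * ∑ j, w j ^ 2 :=
        Finset.sum_le_sum fun i _ => by gcongr; exact hrow i
    _ = Fintype.card m * Fintype.card n * (w ⬝ᵥ w) := by
        simp [dotProduct, sq, mul_assoc]

theorem det_sq_le_card_sq_mul_of_mulVec_mul_transpose_eq_smul [DecidableEq m]
    {P : Matrix m m ℝ} (hP : ∀ i j, |P.adjugate i j| ≤ 1) {t : ℝ} {v : m → ℝ} (hv : v ≠ 0)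
    (ht : (P * Pᵀ) *ᵥ v = t • v) : P.det ^ 2 ≤ Fintype.card m ^ 2 * t := by
  set w := Pᵀ *ᵥ v
  -- Cramer's rule for `Pᵀ` recovers `det P • v` from `w` with coefficients bounded by one.
  have hcramer : Pᵀ.adjugate *ᵥ w = P.det • v := by
    rw [mulVec_mulVec, adjugate_mul, det_transpose, smul_mulVec, one_mulVec]
  have hw : t * (v ⬝ᵥ v) = w ⬝ᵥ w := by
    rw [← smul_eq_mul, ← dotProduct_smul, ← ht, ← mulVec_mulVec, dotProduct_mulVec,
      ← mulVec_transpose]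
  have hadj : ∀ i j, |Pᵀ.adjugate i j| ≤ 1 := fun i j => by
    rw [← adjugate_transpose]; exact hP j i
  have hv2 : 0 < v ⬝ᵥ v :=
    lt_of_le_of_ne (Finset.sum_nonneg fun i _ => mul_self_nonneg (v i))
      (Ne.symm (dotProduct_self_eq_zero.not.mpr hv))
  refine le_of_mul_le_mul_right ?_ hv2
  calc P.det ^ 2 * (v ⬝ᵥ v) = (Pᵀ.adjugate *ᵥ w) ⬝ᵥ (Pᵀ.adjugate *ᵥ w) := by
        rw [hcramer, smul_dotProduct, dotProduct_smul, smul_eq_mul, smul_eq_mul]; ring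
    _ ≤ Fintype.card m * Fintype.card m * (w ⬝ᵥ w) := mulVec_dotProduct_mulVec_self_le hadj w
    _ = Fintype.card m ^ 2 * t * (v ⬝ᵥ v) := by rw [← hw]; ring

theorem IsHermitian.exists_mulVec_eq_smul [DecidableEq n] [Nonempty n] {A : Matrix n n ℝ}
    (hA : A.IsHermitian) : ∃ (t : ℝ) (v : n → ℝ), v ≠ 0 ∧ A *ᵥ v = t • v := by
  obtain ⟨j⟩ := ‹Nonempty n›
  refine ⟨hA.eigenvalues j, hA.eigenvectorBasis j, fun h => ?_, hA.mulVec_eigenvectorBasis j⟩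
  exact hA.eigenvectorBasis.orthonormal.ne_zero j ((WithLp.ofLp_eq_zero 2).mp h)

end Eigenvalue

end Matrix

theorem le_lamMin {N : ℕ} [NeZero N] {A : Matrix (Fin N) (Fin N) ℝ} (hA : A.IsHermitian)
    {c : ℝ} (h : ∀ (t : ℝ) (v : Fin N → ℝ), v ≠ 0 → A *ᵥ v = t • v → c ≤ t) : c ≤ lamMin A :=
  le_csInf hA.exists_mulVec_eq_smul (fun _ ⟨v, hv, ht⟩ => h _ v hv ht)

theorem Fintype.sum_eq_add_ite_of_eq_zero {ι M : Type*} [Fintype ι] [DecidableEq ι]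
    [AddCommMonoid M] {f : ι → M} (k l : ι) (h : ∀ j, j ≠ k → j ≠ l → f j = 0) :
    ∑ j, f j = f k + if l = k then 0 else f l := by
  by_cases hlk : l = k
  · subst hlk
    rw [if_pos rfl, add_zero]
    exact Fintype.sum_eq_single l fun j hj => h j hj hj
  · rw [if_neg hlk]
    exact Fintype.sum_eq_add k l (Ne.symm hlk) fun j hj => h j hj.1 hj.2

section ModeMatrices

variable {n : ℕ} {θv θw : ℝ}

/-- Cells before `s` in increasing order, the remaining ones in decreasing order: every mode
matrix is triangular for this order. -/
def cellOrder (s : ℕ) (i : Fin n) : ℤ := if (i : ℕ) < s then i else -i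

theorem cellOrder_injective (s : ℕ) : Function.Injective (cellOrder (n := n) s) := by
  intro i j h
  simp only [cellOrder] at h
  ext
  split_ifs at h <;> omega

theorem blockTriangular_matAFF : (matAFF n θv).BlockTriangular (cellOrder 0) := by
  intro i j hij
  simp only [cellOrder, matAFF, of_apply, Fin.ext_iff] at hij ⊢
  split_ifs at hij ⊢ <;> first | rfl | omega

theorem blockTriangular_matACC : (matACC n θw).BlockTriangular (cellOrder n) := by
  intro i j hij
  simp only [cellOrder, matACC, of_apply, Fin.ext_iff] at hij ⊢
  split_ifs at hij ⊢ <;> first | rfl | omega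

theorem blockTriangular_matACF (s : ℕ) :
    (matACF n s θv θw).BlockTriangular (cellOrder s) := by
  intro i j hij
  simp only [cellOrder, matACF, of_apply, Fin.ext_iff] at hij ⊢
  split_ifs at hij ⊢ <;> first | rfl | omega

theorem isSubstochastic_matAFF (h0 : 0 ≤ θv) (h1 : θv ≤ 1) :
    (matAFF n θv).IsSubstochastic := by
  refine ⟨fun i j => ?_, fun i => ?_⟩
  · simp only [matAFF, of_apply]; split_ifs <;> linarith
  -- the second index is the column of the off-diagonal entry of row `i`, or `i` if there is none
  · rw [Fintype.sum_eq_add_ite_of_eq_zero i ⟨i - 1, by omega⟩]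
    · simp only [matAFF, of_apply, Fin.ext_iff]
      split_ifs <;> first | omega | linarith
    · intro j hi hl
      simp only [matAFF, of_apply, ne_eq, Fin.ext_iff] at hi hl ⊢
      split_ifs <;> first | rfl | omega

theorem isSubstochastic_matACC (h0 : 0 ≤ θw) (h1 : θw ≤ 1) :
    (matACC n θw).IsSubstochastic := by
  refine ⟨fun i j => ?_, fun i => ?_⟩
  · simp only [matACC, of_apply]; split_ifs <;> linarith
  · rw [Fintype.sum_eq_add_ite_of_eq_zero i ⟨min (i + 1) (n - 1), by omega⟩]
    · simp only [matACC, of_apply, Fin.ext_iff]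
      split_ifs <;> first | omega | linarith
    · intro j hi hl
      simp only [matACC, of_apply, ne_eq, Fin.ext_iff] at hi hl ⊢
      split_ifs <;> first | rfl | omega

theorem isSubstochastic_matACF (s : ℕ) (hv0 : 0 ≤ θv) (hv1 : θv ≤ 1) (hw0 : 0 ≤ θw)
    (hw1 : θw ≤ 1) : (matACF n s θv θw).IsSubstochastic := by
  refine ⟨fun i j => ?_, fun i => ?_⟩
  · simp only [matACF, of_apply]; split_ifs <;> linarith
  · rw [Fintype.sum_eq_add_ite_of_eq_zero i ⟨if (i : ℕ) < s then min (i + 1) (min s n - 1)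
      else max (i - 1) s, by split_ifs <;> omega⟩]
    · simp only [matACF, of_apply, Fin.ext_iff]
      split_ifs <;> first | omega | linarith
    · intro j hi hl
      simp only [matACF, of_apply, ne_eq, Fin.ext_iff] at hi hl ⊢
      split_ifs at hl ⊢ <;> first | rfl | omega

end ModeMatrices

section ModeProducts

variable {n : ℕ} {θv θw : ℝ} {A : Matrix (Fin n) (Fin n) ℝ}

theorem exists_blockTriangular_of_mem_setAO (hA : A ∈ setAO n θv θw) :
    ∃ s, A.BlockTriangular (cellOrder s) := by
  rcases hA with (rfl | rfl) | ⟨s, -, -, rfl⟩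
  exacts [⟨0, blockTriangular_matAFF⟩, ⟨n, blockTriangular_matACC⟩,
    ⟨s, blockTriangular_matACF s⟩]

theorem min_le_diag_of_mem_setAO (hv : 0 ≤ θv) (hA : A ∈ setAO n θv θw)
    (i : Fin n) : min (1 - θv) (1 - θw) ≤ A i i := by
  rw [min_le_iff]
  rcases hA with (rfl | rfl) | ⟨s, -, -, rfl⟩ <;>
    simp only [matAFF, matACC, matACF, of_apply] <;>
    split_ifs <;> first | omega | (left; linarith) | (right; linarith)

theorem pow_le_det_of_mem_setAO (hv0 : 0 ≤ θv) (hv1 : θv ≤ 1) (hw1 : θw ≤ 1)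
    (hA : A ∈ setAO n θv θw) : min (1 - θv) (1 - θw) ^ n ≤ A.det := by
  obtain ⟨s, hs⟩ := exists_blockTriangular_of_mem_setAO hA
  simpa using hs.pow_card_le_det (cellOrder_injective s)
    (le_min (sub_nonneg.2 hv1) (sub_nonneg.2 hw1)) (min_le_diag_of_mem_setAO hv0 hA)

theorem isSubstochastic_of_mem_setAO_s16 (hv0 : 0 ≤ θv) (hv1 : θv ≤ 1) (hw0 : 0 ≤ θw)
    (hw1 : θw ≤ 1) (hA : A ∈ setAO n θv θw) : A.IsSubstochastic := by
  rcases hA with (rfl | rfl) | ⟨s, -, -, rfl⟩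
  exacts [isSubstochastic_matAFF hv0 hv1, isSubstochastic_matACC hw0 hw1,
    isSubstochastic_matACF s hv0 hv1 hw0 hw1]

variable {M : ℕ → Matrix (Fin n) (Fin n) ℝ}

theorem isSubstochastic_prodSeq {ι : ℕ} (hM : ∀ κ, 1 ≤ κ → κ ≤ ι → (M κ).IsSubstochastic) :
    (prodSeq M ι).IsSubstochastic := by
  induction ι with
  | zero => exact isSubstochastic_one
  | succ ι ih => exact (hM _ le_add_self le_rfl).mul (ih fun κ h1 h2 => hM κ h1 (by omega))

theorem pow_le_det_prodSeq {ι : ℕ} {c : ℝ} (hc : 0 ≤ c)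
    (hM : ∀ κ, 1 ≤ κ → κ ≤ ι → c ≤ (M κ).det) : c ^ ι ≤ (prodSeq M ι).det := by
  induction ι with
  | zero => simp [prodSeq]
  | succ ι ih =>
    rw [prodSeq, det_mul, pow_succ']
    exact mul_le_mul (hM _ le_add_self le_rfl) (ih fun κ h1 h2 => hM κ h1 (by omega))
      (pow_nonneg hc ι) (hc.trans (hM _ le_add_self le_rfl))

end ModeProducts

theorem Nat.pow_three_lt_nine_mul_two_pow (n : ℕ) : n ^ 3 < 9 * 2 ^ n := by
  have key : ∀ m, 4 ≤ m → m ^ 3 ≤ 4 * 2 ^ m := by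
    intro m hm
    induction m, hm using Nat.le_induction with
    | base => norm_num
    | succ m hm ih =>
      have : (m + 1) ^ 3 ≤ 2 * m ^ 3 := by
        nlinarith [Nat.mul_le_mul_right (m ^ 2) hm, Nat.mul_le_mul_right m hm]
      rw [pow_succ 2 m]; linarith
  rcases lt_or_ge n 4 with h | h
  · interval_cases n <;> norm_num
  · have := key n h
    have : 0 < 2 ^ n := by positivity
    omega

theorem sq_lt_sqrt_observability_bound {n ι : ℕ} (hn : 2 ≤ n) (hι : 1 ≤ ι) :
    (n : ℝ) ^ 2 < Real.sqrt (4 * n * ((2 * ι + 1 : ℕ) : ℝ) ^ 2 * 2 ^ (n - 2)) := by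
  rw [Real.lt_sqrt (by positivity)]
  have h9 : 9 ≤ (2 * ι + 1) ^ 2 := by nlinarith
  have h4 : 4 * 2 ^ (n - 2) = 2 ^ n := by
    rw [show 4 = 2 ^ 2 by rfl, ← pow_add, Nat.add_sub_cancel' hn]
  have key : (n ^ 2) ^ 2 < 4 * n * (2 * ι + 1) ^ 2 * 2 ^ (n - 2) :=
    calc (n ^ 2) ^ 2 = n * n ^ 3 := by ring
      _ < n * (9 * 2 ^ n) := Nat.mul_lt_mul_of_pos_left (Nat.pow_three_lt_nine_mul_two_pow n)
          (by omega)
      _ ≤ n * ((2 * ι + 1) ^ 2 * 2 ^ n) := by gcongr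
      _ = 4 * n * (2 * ι + 1) ^ 2 * 2 ^ (n - 2) := by rw [← h4]; ring
  exact_mod_cast key

/-- determinant and smallest-eigenvalue lower bounds for `PPᵀ`,
where `P = M_ι ⋯ M_1` is a product of observable-mode matrices and
`θ̃ = min{1−v_mΔt/Δx, 1−wΔt/Δx}`. -/
theorem stmt16
    (n : ℕ) (hn : 2 ≤ n)
    (Δt Δx vm w : ℝ) (hΔt : 0 < Δt) (hΔx : 0 < Δx) (hvm : 0 < vm) (hw : 0 < w)
    (hv1 : vm * Δt / Δx < 1) (hw1 : w * Δt / Δx < 1)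
    (ι : ℕ) (hι : 1 ≤ ι)
    (M : ℕ → Matrix (Fin n) (Fin n) ℝ)
    (hM : ∀ κ, 1 ≤ κ → κ ≤ ι → M κ ∈ setAO n (vm * Δt / Δx) (w * Δt / Δx)) :
    (prodSeq M ι * (prodSeq M ι)ᵀ).det ≥
      (min (1 - vm * Δt / Δx) (1 - w * Δt / Δx)) ^ (2 * ι * n) ∧
    lamMin (prodSeq M ι * (prodSeq M ι)ᵀ) >
      (min (1 - vm * Δt / Δx) (1 - w * Δt / Δx)) ^ (2 * ι * n) /
        Real.sqrt (4 * n * ((2 * ι + 1 : ℕ) : ℝ) ^ 2 * 2 ^ (n - 2)) := by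
  have hv0 : 0 ≤ vm * Δt / Δx := by positivity
  have hw0 : 0 ≤ w * Δt / Δx := by positivity
  set c := min (1 - vm * Δt / Δx) (1 - w * Δt / Δx)
  have hc : 0 < c := lt_min (by linarith) (by linarith)
  set P := prodSeq M ι
  have hP : P.IsSubstochastic := isSubstochastic_prodSeq fun κ h1 h2 =>
    isSubstochastic_of_mem_setAO_s16 hv0 hv1.le hw0 hw1.le (hM κ h1 h2)
  have hdet : c ^ (2 * ι * n) ≤ P.det ^ 2 := by
    have := pow_le_det_prodSeq (pow_nonneg hc.le n) fun κ h1 h2 =>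
      pow_le_det_of_mem_setAO hv0 hv1.le hw1.le (hM κ h1 h2)
    calc c ^ (2 * ι * n) = ((c ^ n) ^ ι) ^ 2 := by ring
      _ ≤ P.det ^ 2 := pow_le_pow_left₀ (by positivity) this 2
  refine ⟨by rwa [det_mul, det_transpose, ← sq], ?_⟩
  have : NeZero n := ⟨by omega⟩
  have hn2 : (0 : ℝ) < n ^ 2 := by positivity
  have hlam : P.det ^ 2 / n ^ 2 ≤ lamMin (P * Pᵀ) := by
    refine le_lamMin (conjTranspose_eq_transpose_of_trivial P ▸
      isHermitian_mul_conjTranspose_self P) fun t v hv ht => ?_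
    rw [div_le_iff₀ hn2, mul_comm]
    simpa using det_sq_le_card_sq_mul_of_mulVec_mul_transpose_eq_smul
      hP.abs_adjugate_apply_le_one hv ht
  calc c ^ (2 * ι * n) / Real.sqrt (4 * n * ((2 * ι + 1 : ℕ) : ℝ) ^ 2 * 2 ^ (n - 2))
      < c ^ (2 * ι * n) / n ^ 2 :=
        div_lt_div_of_pos_left (by positivity) hn2 (sq_lt_sqrt_observability_bound hn hι)
    _ ≤ P.det ^ 2 / n ^ 2 := by gcongr
    _ ≤ lamMin (P * Pᵀ) := hlam
end
end

section
/- Let U ∈ ℝ^{n×n} be the permutation matrix with U(1,1) = 1, U(2,n) = 1, U(i,i−1) = 1 for 3 ≤ i ≤ n, and all other entries 0. Then for every A ∈ 𝒜_U, the matrix UAU^{−1} is block lower triangular of the form [[I_2, 0],[Ǎ^{(21)}, Ǎ^{(2)}]], where I_2 is the 2×2 identity, Ǎ^{(2)} ∈ ℝ^{(n−2)×(n−2)}, and Ǎ^{(21)} ∈ ℝ^{(n−2)×2} has all entries zero except possibly Ǎ^{(21)}(1,1), which equals 0 or v_m·Δt/Δx, and Ǎ^{(21)}(n−2,2), which equals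 0 or w·Δt/Δx. Equivalently: the first row of every A ∈ 𝒜_U is e_1^T, its n-th row is e_n^T, A(l,1) = 0 for all l ∉ {1,2}, and A(l,n) = 0 for all l ∉ {n−1,n}; thus in every unobservable mode the two boundary cells evolve autonomously with identity dynamics. -/
/-!
`U` is the permutation matrix of the permutation `σ` of the cells that lists the two boundary
cells first, so `(U A U⁻¹) i j = A (σ i) (σ j)`. Every mode in `𝒜_U` has the unit rows `e₁ᵀ`,
`eₙᵀ` at the boundary cells, and the boundary columns meet only the boundary cells and their
neighbours; read in the order `σ` this is the block lower triangular form.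
-/

open Matrix Filter Finset

noncomputable section

/-- the unobservable FC-mode matrix `A(s̃,s̄)` with `s̃ = s`, `s̄ = N−1−s`,
for `1 ≤ s ≤ N−2` -/
def matAU (N s : ℕ) (θv θw : ℝ) : Matrix (Fin N) (Fin N) ℝ :=
  Matrix.of fun i j =>
    if (i : ℕ) < s then
      (if (i : ℕ) = 0 ∧ (j : ℕ) = 0 then 1
       else if i = j then 1 - θv
       else if (i : ℕ) = (j : ℕ) + 1 ∧ (j : ℕ) < s then θv
       else 0)
    else if (i : ℕ) = s then
      (if (j : ℕ) + 1 = s then θv else if (j : ℕ) = s then 1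
       else if (j : ℕ) = s + 1 then θw else 0)
    else
      (if (i : ℕ) = N - 1 ∧ (j : ℕ) = N - 1 then 1
       else if i = j then 1 - θw
       else if (j : ℕ) = (i : ℕ) + 1 then θw
       else 0)

/-- `diag(Θ̂_{N−2}, 1)` (mode FC1 with `s = n−1`) -/
def matAUtop (N : ℕ) (θv : ℝ) : Matrix (Fin N) (Fin N) ℝ :=
  Matrix.of fun i j =>
    if (i : ℕ) = N - 1 then (if (j : ℕ) = N - 1 then 1 else 0)
    else if (i : ℕ) = 0 ∧ (j : ℕ) = 0 then 1
    else if i = j then 1 - θv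
    else if (i : ℕ) = (j : ℕ) + 1 then θv
    else 0

/-- `diag(1, Δ̂_{N−2})` (mode FC2 with `s = 1`) -/
def matAUbot (N : ℕ) (θw : ℝ) : Matrix (Fin N) (Fin N) ℝ :=
  Matrix.of fun i j =>
    if (i : ℕ) = 0 then (if (j : ℕ) = 0 then 1 else 0)
    else if (i : ℕ) = N - 1 ∧ (j : ℕ) = N - 1 then 1
    else if i = j then 1 - θw
    else if (j : ℕ) = (i : ℕ) + 1 then θw
    else 0

/-- set of unobservable-mode state transition matrices 𝒜_U -/
def setAU (N : ℕ) (θv θw : ℝ) : Set (Matrix (Fin N) (Fin N) ℝ) :=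
  {M | ∃ s, 1 ≤ s ∧ s ≤ N - 2 ∧ M = matAU N s θv θw} ∪
    {matAUtop N θv, matAUbot N θw}

/-- the permutation matrix `U` reordering the state as `(ρ¹, ρⁿ, ρ², …, ρ^{n−1})` -/
def matU (N : ℕ) : Matrix (Fin N) (Fin N) ℝ :=
  Matrix.of fun i j =>
    if (i : ℕ) = 0 ∧ (j : ℕ) = 0 then 1
    else if (i : ℕ) = 1 ∧ (j : ℕ) = N - 1 then 1
    else if 2 ≤ (i : ℕ) ∧ (j : ℕ) + 1 = (i : ℕ) then 1
    else 0

theorem Matrix.permMatrix_mul_mul_inv {ι R : Type*} [Fintype ι] [DecidableEq ι] [CommRing R]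
    (σ : Equiv.Perm ι) (A : Matrix ι ι R) :
    σ.permMatrix R * A * (σ.permMatrix R)⁻¹ = A.submatrix σ σ := by
  have hinv : (σ.permMatrix R)⁻¹ = σ⁻¹.permMatrix R :=
    Matrix.inv_eq_right_inv (by rw [← permMatrix_mul, inv_mul_cancel, permMatrix_one])
  rw [hinv, PEquiv.toMatrix_toPEquiv_mul, PEquiv.mul_toMatrix_toPEquiv, submatrix_submatrix]
  rfl

section BoundaryFirst

variable {n : ℕ}

/-- Position `i` of the reordered state `(ρ¹, ρⁿ, ρ², …, ρⁿ⁻¹)` holds the cell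
`boundaryFirstFun i` (indices counted from `0`). -/
def boundaryFirstFun (i : Fin n) : Fin n :=
  ⟨if (i : ℕ) = 0 then 0 else if (i : ℕ) = 1 then n - 1 else i - 1, by split_ifs <;> omega⟩

theorem boundaryFirstFun_injective : Function.Injective (boundaryFirstFun (n := n)) := by
  intro a b hab
  have := congrArg Fin.val hab
  simp only [boundaryFirstFun] at this
  ext
  split_ifs at this <;> omega

def boundaryFirst (n : ℕ) : Equiv.Perm (Fin n) :=
  Equiv.ofBijective boundaryFirstFun (Finite.injective_iff_bijective.mp boundaryFirstFun_injective)

theorem boundaryFirst_val (i : Fin n) :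
    (boundaryFirst n i : ℕ) = if (i : ℕ) = 0 then 0 else if (i : ℕ) = 1 then n - 1 else i - 1 :=
  rfl

theorem boundaryFirst_val_of_two_le {i : Fin n} (hi : 2 ≤ (i : ℕ)) :
    (boundaryFirst n i : ℕ) = i - 1 := by
  rw [boundaryFirst_val]; split_ifs <;> omega

theorem matU_eq_permMatrix : matU n = (boundaryFirst n).permMatrix ℝ := by
  ext i k
  simp only [matU, of_apply, PEquiv.toMatrix_apply, Equiv.toPEquiv_apply, Option.mem_def,
    Option.some.injEq, Fin.ext_iff, boundaryFirst_val]
  have := i.isLt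
  have := k.isLt
  split_ifs <;> first | rfl | (exfalso; omega)

theorem matU_conj_apply (A : Matrix (Fin n) (Fin n) ℝ) (i j : Fin n) :
    (matU n * A * (matU n)⁻¹) i j = A (boundaryFirst n i) (boundaryFirst n j) := by
  rw [matU_eq_permMatrix, permMatrix_mul_mul_inv, submatrix_apply]

end BoundaryFirst

section UnobservableModes

variable {n : ℕ} {θv θw : ℝ} {A : Matrix (Fin n) (Fin n) ℝ}

/-- The boundary cells `0` and `n - 1` evolve autonomously with identity dynamics and act only
on their neighbours `1` and `n - 2`, with weights in `{0, θv}` and `{0, θw}`. -/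
structure HasIdentityBoundaryDynamics (θv θw : ℝ) (A : Matrix (Fin n) (Fin n) ℝ) : Prop where
  boundary_row : ∀ i j : Fin n, ((i : ℕ) = 0 ∨ (i : ℕ) = n - 1) → A i j = if j = i then 1 else 0
  first_col : ∀ i j : Fin n, (j : ℕ) = 0 → (i : ℕ) ≠ 0 → (i : ℕ) ≠ 1 → A i j = 0
  last_col : ∀ i j : Fin n, (j : ℕ) = n - 1 → (i : ℕ) ≠ n - 2 → (i : ℕ) ≠ n - 1 → A i j = 0
  inflow : ∀ i j : Fin n, (i : ℕ) = 1 → (j : ℕ) = 0 → A i j = 0 ∨ A i j = θv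
  outflow : ∀ i j : Fin n, (i : ℕ) + 2 = n → (j : ℕ) + 1 = n → A i j = 0 ∨ A i j = θw

theorem hasIdentityBoundaryDynamics_of_mem_setAU (hA : A ∈ setAU n θv θw) :
    HasIdentityBoundaryDynamics θv θw A := by
  simp only [setAU, Set.mem_union, Set.mem_ofPred_eq, Set.mem_insert_iff,
    Set.mem_singleton_iff] at hA
  rcases hA with ⟨s, hs1, hs2, rfl⟩ | rfl | rfl <;>
    refine ⟨?_, ?_, ?_, ?_, ?_⟩ <;>
      rintro ⟨i, hi⟩ ⟨j, hj⟩ <;>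
        simp only [matAU, matAUtop, matAUbot, of_apply, Fin.mk.injEq] <;>
          intros <;>
            split_ifs <;>
              first | rfl | exact Or.inl rfl | exact Or.inr rfl | (exfalso; omega)

namespace HasIdentityBoundaryDynamics

variable (h : HasIdentityBoundaryDynamics θv θw A) {i j : Fin n}
include h

theorem conj_apply_of_lt_two (hi : (i : ℕ) < 2) :
    (matU n * A * (matU n)⁻¹) i j = if i = j then 1 else 0 := by
  have hσi : (boundaryFirst n i : ℕ) = 0 ∨ (boundaryFirst n i : ℕ) = n - 1 := by
    rw [boundaryFirst_val]; split_ifs <;> omega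
  rw [matU_conj_apply, h.boundary_row _ _ hσi]
  simp only [EmbeddingLike.apply_eq_iff_eq, eq_comm]

theorem conj_apply_inflow (hi : (i : ℕ) = 2) (hj : (j : ℕ) = 0) :
    (matU n * A * (matU n)⁻¹) i j = 0 ∨ (matU n * A * (matU n)⁻¹) i j = θv := by
  rw [matU_conj_apply]
  exact h.inflow _ _ (by simp [boundaryFirst_val, hi]) (by simp [boundaryFirst_val, hj])

theorem conj_apply_outflow (hi2 : 2 ≤ (i : ℕ)) (hi : (i : ℕ) = n - 1) (hj : (j : ℕ) = 1) :
    (matU n * A * (matU n)⁻¹) i j = 0 ∨ (matU n * A * (matU n)⁻¹) i j = θw := by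
  have hσi := boundaryFirst_val_of_two_le hi2
  have hσj : (boundaryFirst n j : ℕ) = n - 1 := by simp [boundaryFirst_val, hj]
  rw [matU_conj_apply]
  exact h.outflow _ _ (by omega) (by omega)

theorem conj_apply_eq_zero (hi2 : 2 ≤ (i : ℕ)) (hj2 : (j : ℕ) < 2)
    (hin : ¬((i : ℕ) = 2 ∧ (j : ℕ) = 0)) (hout : ¬((i : ℕ) = n - 1 ∧ (j : ℕ) = 1)) :
    (matU n * A * (matU n)⁻¹) i j = 0 := by
  have hσi := boundaryFirst_val_of_two_le hi2
  have hi := i.isLt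
  rw [matU_conj_apply]
  rcases (by omega : (j : ℕ) = 0 ∨ (j : ℕ) = 1) with hj | hj
  · exact h.first_col _ _ (by simp [boundaryFirst_val, hj]) (by omega) (by omega)
  · exact h.last_col _ _ (by simp [boundaryFirst_val, hj]) (by omega) (by omega)

end HasIdentityBoundaryDynamics

end UnobservableModes

/-- structure of the unobservable modes under the Kalman observability
canonical transformation: `U A U⁻¹` is block lower triangular with top-left block
`I₂`, and the coupling block `Ǎ^{(21)}` is zero except possibly at `(1,1)`
(value `v_mΔt/Δx`) and `(n−2,2)` (value `wΔt/Δx`); equivalently, the first row of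
`A` is `e₁ᵀ`, its `n`-th row is `e_nᵀ`, `A(l,1) = 0` for `l ∉ {1,2}` and
`A(l,n) = 0` for `l ∉ {n−1,n}`. -/
theorem stmt17
    (n : ℕ) (hn : 2 ≤ n)
    (Δt Δx vm w : ℝ) :
    ∀ A ∈ setAU n (vm * Δt / Δx) (w * Δt / Δx),
      -- block lower triangular form of U A U⁻¹ with identity top-left 2×2 block
      ((∀ i j : Fin n, (i : ℕ) < 2 →
          (matU n * A * (matU n)⁻¹) i j = if i = j then 1 else 0) ∧
        (∀ i j : Fin n, 2 ≤ (i : ℕ) → (j : ℕ) < 2 →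
          (((i : ℕ) = 2 ∧ (j : ℕ) = 0 →
              (matU n * A * (matU n)⁻¹) i j = 0 ∨
                (matU n * A * (matU n)⁻¹) i j = vm * Δt / Δx) ∧
            ((i : ℕ) = n - 1 ∧ (j : ℕ) = 1 →
              (matU n * A * (matU n)⁻¹) i j = 0 ∨
                (matU n * A * (matU n)⁻¹) i j = w * Δt / Δx) ∧
            (¬((i : ℕ) = 2 ∧ (j : ℕ) = 0) → ¬((i : ℕ) = n - 1 ∧ (j : ℕ) = 1) →
              (matU n * A * (matU n)⁻¹) i j = 0)))) ∧
      -- equivalent row/column description of A itself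
      ((∀ j : Fin n, A ⟨0, by omega⟩ j = if (j : ℕ) = 0 then 1 else 0) ∧
        (∀ j : Fin n, A ⟨n - 1, by omega⟩ j = if (j : ℕ) = n - 1 then 1 else 0) ∧
        (∀ i : Fin n, (i : ℕ) ≠ 0 → (i : ℕ) ≠ 1 → A i ⟨0, by omega⟩ = 0) ∧
        (∀ i : Fin n, (i : ℕ) ≠ n - 2 → (i : ℕ) ≠ n - 1 → A i ⟨n - 1, by omega⟩ = 0)) := by
  intro A hA
  have h := hasIdentityBoundaryDynamics_of_mem_setAU hA
  refine ⟨⟨fun i j hi => h.conj_apply_of_lt_two hi, fun i j hi hj =>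
      ⟨fun ⟨h2, h0⟩ => h.conj_apply_inflow h2 h0, fun ⟨hl, h1⟩ => h.conj_apply_outflow hi hl h1,
        h.conj_apply_eq_zero hi hj⟩⟩,
    fun j => ?_, fun j => ?_, fun i h0 h1 => h.first_col i _ rfl h0 h1,
    fun i h0 h1 => h.last_col i _ rfl h0 h1⟩
  · rw [h.boundary_row _ _ (Or.inl rfl)]
    simp [Fin.ext_iff]
  · rw [h.boundary_row _ _ (Or.inr rfl)]
    simp [Fin.ext_iff]

end
end

section
/- Let n ≥ 3 and let θ̲ = min{v_m·Δt/Δx, 1−v_m·Δt/Δx, w·Δt/Δx, 1−w·Δt/Δx}. For any integer ι with 1 ≤ ι ≤ n−2 and any M_1,…,M_ι ∈ 𝒜_O, the 2×n matrix H_b·M_ιM_{ι−1}⋯M_1 has the following structure: there exist integers ι_1, ι_2 ≥ 1 with ι_1 ≤ ι+1, ι_2 ≤ ι+1 and ι_1 + ι_2 ≥ ι+2 such that the first row vanishes in columns ι_1+1,…,n and each of its entries in columns 1,…,ι_1 lies in the interval [θ̲^ι, 1], while the second row vanishes in columns 1,…,n−ι_2 and each of its entries in columns n−ι_2+1,…,n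 lies in the interval [θ̲^ι, 1]. -/
/-! Every matrix of `𝒜_O` is tridiagonal and substochastic, has a positive diagonal, and all its
nonzero entries are at least `θ̲`. So if a nonnegative row vector is `≥ δ` on a set of consecutive
columns and vanishes elsewhere, multiplying it on the right by such a matrix gives a vector that is
`≥ δ θ̲` on the same columns, possibly extended by the adjacent one, and vanishes elsewhere.
Starting from `e₁ᵀ` and `e_nᵀ`, the rows of `H_b M_ι ⋯ M_1` are therefore an initial block of length
`ι₁` and a final block of length `ι₂`. The first block grows when the superdiagonal entry leaving it
is nonzero, the second when the subdiagonal entry leaving it is. `A_FF` has a full subdiagonal,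
`A_CC` a full superdiagonal, and `A_CF^s` has superdiagonal entries left of `s` and subdiagonal
entries right of `s`; hence while `ι₁ + ι₂ < n` at least one block grows at each step, which gives
`ι₁ + ι₂ ≥ ι + 2`. The bound by `1` holds because products of substochastic matrices are
substochastic. -/

open Matrix Filter Finset

noncomputable section

namespace Matrix

section SubStochastic

variable {R n : Type*} [Fintype n] [DecidableEq n] [Semiring R] [PartialOrder R] [IsOrderedRing R]

def subStochastic (R n : Type*) [Fintype n] [DecidableEq n] [Semiring R] [PartialOrder R]
    [IsOrderedRing R] : Submonoid (Matrix n n R) where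
  carrier := {M | (∀ i j, 0 ≤ M i j) ∧ M *ᵥ 1 ≤ 1}
  mul_mem' {M N} hM hN := by
    refine ⟨fun i j => sum_nonneg fun k _ => mul_nonneg (hM.1 _ _) (hN.1 _ _), ?_⟩
    rw [← mulVec_mulVec]
    exact le_trans (fun i => dotProduct_le_dotProduct_of_nonneg_left hN.2 (hM.1 i)) hM.2
  one_mem' := by simp [zero_le_one_elem]

lemma mem_subStochastic_iff_sum {M : Matrix n n R} :
    M ∈ subStochastic R n ↔ (∀ i j, 0 ≤ M i j) ∧ ∀ i, ∑ j, M i j ≤ 1 := by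
  simp [subStochastic, Pi.le_def, mulVec, dotProduct]

lemma le_one_of_mem_subStochastic {M : Matrix n n R} (hM : M ∈ subStochastic R n) (i j : n) :
    M i j ≤ 1 :=
  (single_le_sum (fun k _ => hM.1 i k) (mem_univ j)).trans
    ((mem_subStochastic_iff_sum.1 hM).2 i)

end SubStochastic

end Matrix

section Blocks

variable {ι R : Type*} [Semiring R] [PartialOrder R]

def IsBlockAbove (S : Set ι) (δ : R) (u : ι → R) : Prop :=
  (∀ i ∉ S, u i = 0) ∧ ∀ i ∈ S, δ ≤ u i

lemma isBlockAbove_one_apply [DecidableEq ι] {S : Set ι} (i : ι) (hS : ∀ j, j ∈ S ↔ j = i) :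
    IsBlockAbove S 1 ((1 : Matrix ι ι R) i) := by
  refine ⟨fun j hj => ?_, fun j hj => ?_⟩ <;> rw [Matrix.one_apply]
  · rw [if_neg fun h => hj ((hS j).2 h.symm)]
  · rw [if_pos ((hS j).1 hj).symm]

lemma IsBlockAbove.vecMul [Fintype ι] [IsOrderedRing R] {S S' : Set ι} {δ θ : R} {u : ι → R}
    {A : Matrix ι ι R} (hu : IsBlockAbove S δ u) (hu0 : 0 ≤ u) (hA0 : ∀ i j, 0 ≤ A i j) (hθ : 0 ≤ θ)
    (hcut : ∀ i ∈ S, ∀ j ∉ S', A i j = 0) (hfill : ∀ j ∈ S', ∃ i ∈ S, θ ≤ A i j) :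
    IsBlockAbove S' (δ * θ) (u ᵥ* A) := by
  refine ⟨fun j hj => Finset.sum_eq_zero fun i _ => ?_, fun j hj => ?_⟩
  · show u i * A i j = 0
    by_cases hi : i ∈ S
    · rw [hcut i hi j hj, mul_zero]
    · rw [hu.1 i hi, zero_mul]
  · obtain ⟨i, hi, hij⟩ := hfill j hj
    calc δ * θ ≤ u i * A i j := mul_le_mul (hu.2 i hi) hij hθ (hu0 i)
      _ ≤ (u ᵥ* A) j :=
        Finset.single_le_sum (f := fun i => u i * A i j)
          (fun k _ => mul_nonneg (hu0 k) (hA0 k j)) (Finset.mem_univ i)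

end Blocks

section Tridiagonal

variable {n : ℕ} {A : Matrix (Fin n) (Fin n) ℝ} {u : Fin n → ℝ} {δ θ : ℝ}

theorem IsBlockAbove.vecMul_of_upper {k : ℕ} {i i' : Fin n} (hi : (i : ℕ) + 1 = k)
    (hi' : (i' : ℕ) = k) (hθ : 0 ≤ θ) (hA : ∀ r c, A r c = 0 ∨ θ ≤ A r c)
    (hdiag : ∀ r, θ ≤ A r r) (hband : ∀ r c : Fin n, (r : ℕ) + 1 < c → A r c = 0)
    (hu0 : 0 ≤ u) (hu : IsBlockAbove {c : Fin n | (c : ℕ) < k} δ u) :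
    ∃ k', k ≤ k' ∧ k' ≤ k + 1 ∧ (A i i' ≠ 0 → k' = k + 1) ∧
      IsBlockAbove {c : Fin n | (c : ℕ) < k'} (δ * θ) (u ᵥ* A) := by
  have hA0 : ∀ r c, 0 ≤ A r c := fun r c => (hA r c).elim (fun h => h.ge) hθ.trans
  by_cases h : A i i' = 0
  · refine ⟨k, le_rfl, k.le_succ, fun h' => absurd h h', hu.vecMul hu0 hA0 hθ ?_ ?_⟩
    · intro r hr c hc
      simp only [Set.mem_ofPred_eq, not_lt] at hr hc
      by_cases hrc : r = i ∧ c = i'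
      · rwa [hrc.1, hrc.2]
      · exact hband r c (by rw [Fin.ext_iff, Fin.ext_iff] at hrc; omega)
    · exact fun c hc => ⟨c, hc, hdiag c⟩
  · refine ⟨k + 1, k.le_succ, le_rfl, fun _ => rfl, hu.vecMul hu0 hA0 hθ ?_ ?_⟩
    · intro r hr c hc
      simp only [Set.mem_ofPred_eq, not_lt] at hr hc
      exact hband r c (by omega)
    · intro c hc
      simp only [Set.mem_ofPred_eq] at hc
      rcases Nat.lt_succ_iff_lt_or_eq.1 hc with hc | hc
      · exact ⟨c, hc, hdiag c⟩
      · obtain rfl : c = i' := Fin.ext (by omega)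
        exact ⟨i, by simp only [Set.mem_ofPred_eq]; omega, (hA i c).resolve_left h⟩

theorem IsBlockAbove.vecMul_of_lower {k : ℕ} {j j' : Fin n} (hj : (j : ℕ) + 1 = j')
    (hj' : (j' : ℕ) = n - k) (hθ : 0 ≤ θ) (hA : ∀ r c, A r c = 0 ∨ θ ≤ A r c)
    (hdiag : ∀ r, θ ≤ A r r) (hband : ∀ r c : Fin n, (c : ℕ) + 1 < r → A r c = 0)
    (hu0 : 0 ≤ u) (hu : IsBlockAbove {c : Fin n | n - k ≤ (c : ℕ)} δ u) :
    ∃ k', k ≤ k' ∧ k' ≤ k + 1 ∧ (A j' j ≠ 0 → k' = k + 1) ∧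
      IsBlockAbove {c : Fin n | n - k' ≤ (c : ℕ)} (δ * θ) (u ᵥ* A) := by
  have hA0 : ∀ r c, 0 ≤ A r c := fun r c => (hA r c).elim (fun h => h.ge) hθ.trans
  by_cases h : A j' j = 0
  · refine ⟨k, le_rfl, k.le_succ, fun h' => absurd h h', hu.vecMul hu0 hA0 hθ ?_ ?_⟩
    · intro r hr c hc
      simp only [Set.mem_ofPred_eq, not_le] at hr hc
      by_cases hrc : r = j' ∧ c = j
      · rwa [hrc.1, hrc.2]
      · exact hband r c (by rw [Fin.ext_iff, Fin.ext_iff] at hrc; omega)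
    · exact fun c hc => ⟨c, hc, hdiag c⟩
  · refine ⟨k + 1, k.le_succ, le_rfl, fun _ => rfl, hu.vecMul hu0 hA0 hθ ?_ ?_⟩
    · intro r hr c hc
      simp only [Set.mem_ofPred_eq, not_le] at hr hc
      exact hband r c (by omega)
    · intro c hc
      simp only [Set.mem_ofPred_eq] at hc
      by_cases hck : n - k ≤ (c : ℕ)
      · exact ⟨c, hck, hdiag c⟩
      · obtain rfl : c = j := Fin.ext (by omega)
        exact ⟨j', by simp only [Set.mem_ofPred_eq]; omega, (hA j' c).resolve_left h⟩

end Tridiagonal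

section ModeMatrices

variable {n : ℕ} {θv θw : ℝ} {A : Matrix (Fin n) (Fin n) ℝ}

def thetaLow (θv θw : ℝ) : ℝ := min (min θv (1 - θv)) (min θw (1 - θw))

lemma thetaLow_le (θv θw : ℝ) :
    thetaLow θv θw ≤ θv ∧ thetaLow θv θw ≤ 1 - θv ∧ thetaLow θv θw ≤ θw ∧
      thetaLow θv θw ≤ 1 - θw :=
  ⟨(min_le_left _ _).trans (min_le_left _ _), (min_le_left _ _).trans (min_le_right _ _),
    (min_le_right _ _).trans (min_le_left _ _), (min_le_right _ _).trans (min_le_right _ _)⟩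

lemma thetaLow_nonneg (hv0 : 0 ≤ θv) (hv1 : θv ≤ 1) (hw0 : 0 ≤ θw) (hw1 : θw ≤ 1) :
    0 ≤ thetaLow θv θw :=
  le_min (le_min hv0 (by linarith)) (le_min hw0 (by linarith))

lemma eq_zero_or_thetaLow_le_of_mem_setAO (hA : A ∈ setAO n θv θw) (r c : Fin n) :
    A r c = 0 ∨ thetaLow θv θw ≤ A r c := by
  obtain ⟨h1, h2, h3, h4⟩ := thetaLow_le θv θw
  rcases hA with (rfl | rfl) | ⟨s, -, -, rfl⟩ <;>
    simp only [matAFF, matACC, matACF, of_apply] <;> split_ifs <;>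
    first | exact Or.inl rfl | (right; linarith)

lemma thetaLow_le_diag_of_mem_setAO (hA : A ∈ setAO n θv θw) (r : Fin n) :
    thetaLow θv θw ≤ A r r := by
  obtain ⟨h1, h2, -, h4⟩ := thetaLow_le θv θw
  rcases hA with (rfl | rfl) | ⟨s, -, -, rfl⟩ <;>
    simp only [matAFF, matACC, matACF, of_apply] <;> split_ifs <;> first | linarith | omega

lemma eq_zero_of_mem_setAO (hA : A ∈ setAO n θv θw) (r c : Fin n)
    (h : (r : ℕ) + 1 < c ∨ (c : ℕ) + 1 < r) : A r c = 0 := by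
  rcases hA with (rfl | rfl) | ⟨s, -, -, rfl⟩ <;>
    simp only [matAFF, matACC, matACF, of_apply] <;> split_ifs <;> first | rfl | (exfalso; omega)

lemma sum_le_one_of_eq_zero_off_pair {ι : Type*} [Fintype ι] {f : ι → ℝ} (a b : ι)
    (hf : ∀ c, c ≠ a → c ≠ b → f c = 0) (ha : f a ≤ 1) (hab : a ≠ b → f a + f b ≤ 1) :
    ∑ c, f c ≤ 1 := by
  by_cases h : a = b
  · subst h; rwa [Fintype.sum_eq_single a fun c hc => hf c hc hc]
  · rw [Fintype.sum_eq_add a b h fun c hc => hf c hc.1 hc.2]; exact hab h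

lemma sum_row_le_one_of_mem_setAO (hA : A ∈ setAO n θv θw) (hv0 : 0 ≤ θv) (hw0 : 0 ≤ θw)
    (r : Fin n) : ∑ c, A r c ≤ 1 := by
  -- In each case `b` is the column other than `r` where row `r` can be nonzero (or `r` itself).
  rcases hA with (rfl | rfl) | ⟨s, -, hs, rfl⟩
  · obtain ⟨b, hb⟩ : ∃ b : Fin n, (b : ℕ) = r - 1 := ⟨⟨r - 1, by omega⟩, rfl⟩
    refine sum_le_one_of_eq_zero_off_pair r b (fun c hc hc' => ?_) ?_ (fun h => ?_) <;>
      simp only [matAFF, of_apply, Fin.ext_iff] at * <;> split_ifs <;>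
      first | rfl | linarith | omega
  · obtain ⟨b, hb⟩ : ∃ b : Fin n, (b : ℕ) = min ((r : ℕ) + 1) (n - 1) :=
      ⟨⟨min (r + 1) (n - 1), by omega⟩, rfl⟩
    refine sum_le_one_of_eq_zero_off_pair r b (fun c hc hc' => ?_) ?_ (fun h => ?_) <;>
      simp only [matACC, of_apply, Fin.ext_iff] at * <;> split_ifs <;>
      first | rfl | linarith | omega
  · obtain ⟨b, hb⟩ : ∃ b : Fin n,
        (b : ℕ) = if (r : ℕ) < s then min ((r : ℕ) + 1) (s - 1) else max ((r : ℕ) - 1) s :=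
      ⟨⟨if (r : ℕ) < s then min (r + 1) (s - 1) else max (r - 1) s, by split_ifs <;> omega⟩, rfl⟩
    refine sum_le_one_of_eq_zero_off_pair r b (fun c hc hc' => ?_) ?_ (fun h => ?_) <;>
      simp only [matACF, of_apply, Fin.ext_iff] at * <;> split_ifs at * <;>
      first | rfl | linarith | omega

lemma mem_subStochastic_of_mem_setAO (hA : A ∈ setAO n θv θw) (hv0 : 0 ≤ θv) (hv1 : θv ≤ 1)
    (hw0 : 0 ≤ θw) (hw1 : θw ≤ 1) : A ∈ subStochastic ℝ (Fin n) :=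
  mem_subStochastic_iff_sum.2
    ⟨fun r c => (eq_zero_or_thetaLow_le_of_mem_setAO hA r c).elim (fun h => h.ge)
      (thetaLow_nonneg hv0 hv1 hw0 hw1).trans,
    sum_row_le_one_of_mem_setAO hA hv0 hw0⟩

lemma superdiag_ne_zero_or_subdiag_ne_zero_of_mem_setAO (hA : A ∈ setAO n θv θw) (hv : θv ≠ 0)
    (hw : θw ≠ 0) {i i' j j' : Fin n} (hi : (i : ℕ) + 1 = i') (hj : (j : ℕ) + 1 = j')
    (hij : (i' : ℕ) ≤ j) : A i i' ≠ 0 ∨ A j' j ≠ 0 := by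
  rcases hA with (rfl | rfl) | ⟨s, -, -, rfl⟩
  · right; simp only [matAFF, of_apply]; split_ifs <;> omega
  · left; simp only [matACC, of_apply]; split_ifs <;> omega
  · simp only [matACF, of_apply]; split_ifs <;> first | omega | simp [hv, hw]

end ModeMatrices

section Products

variable {n : ℕ} {θv θw : ℝ}

theorem exists_isBlockAbove_vecMul_of_mem_setAO {A : Matrix (Fin n) (Fin n) ℝ}
    (hA : A ∈ setAO n θv θw) (hv0 : 0 < θv) (hv1 : θv < 1) (hw0 : 0 < θw) (hw1 : θw < 1)
    {u v : Fin n → ℝ} {δ : ℝ} {k₁ k₂ : ℕ} (hk₁ : 1 ≤ k₁) (hk₁n : k₁ < n) (hk₂ : 1 ≤ k₂)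
    (hk₂n : k₂ < n) (hu_nonneg : 0 ≤ u) (hv_nonneg : 0 ≤ v)
    (hu : IsBlockAbove {c : Fin n | (c : ℕ) < k₁} δ u) (hv : IsBlockAbove {c : Fin n | n - k₂ ≤ (c : ℕ)} δ v) :
    ∃ k₁' k₂', k₁ ≤ k₁' ∧ k₁' ≤ k₁ + 1 ∧ k₂ ≤ k₂' ∧ k₂' ≤ k₂ + 1 ∧
      (k₁ + k₂ < n → k₁ + k₂ < k₁' + k₂') ∧
      IsBlockAbove {c : Fin n | (c : ℕ) < k₁'} (δ * thetaLow θv θw) (u ᵥ* A) ∧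
      IsBlockAbove {c : Fin n | n - k₂' ≤ (c : ℕ)} (δ * thetaLow θv θw) (v ᵥ* A) := by
  have hθ := thetaLow_nonneg hv0.le hv1.le hw0.le hw1.le
  have hentry := eq_zero_or_thetaLow_le_of_mem_setAO hA
  have hdiag := thetaLow_le_diag_of_mem_setAO hA
  obtain ⟨i, hi⟩ : ∃ i : Fin n, (i : ℕ) + 1 = k₁ := ⟨⟨k₁ - 1, by omega⟩, by simp; omega⟩
  obtain ⟨i', hi'⟩ : ∃ i' : Fin n, (i' : ℕ) = k₁ := ⟨⟨k₁, by omega⟩, rfl⟩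
  obtain ⟨j, hj⟩ : ∃ j : Fin n, (j : ℕ) + 1 = n - k₂ := ⟨⟨n - k₂ - 1, by omega⟩, by simp; omega⟩
  obtain ⟨j', hj'⟩ : ∃ j' : Fin n, (j' : ℕ) = n - k₂ := ⟨⟨n - k₂, by omega⟩, rfl⟩
  obtain ⟨k₁', hk₁', hk₁'', hgrow₁, hu'⟩ := hu.vecMul_of_upper hi hi' hθ hentry hdiag
    (fun r c h => eq_zero_of_mem_setAO hA r c (.inl h)) hu_nonneg
  obtain ⟨k₂', hk₂', hk₂'', hgrow₂, hv'⟩ := hv.vecMul_of_lower (hj.trans hj'.symm) hj' hθ hentry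
    hdiag (fun r c h => eq_zero_of_mem_setAO hA r c (.inr h)) hv_nonneg
  refine ⟨k₁', k₂', hk₁', hk₁'', hk₂', hk₂'', fun hlt => ?_, hu', hv'⟩
  rcases superdiag_ne_zero_or_subdiag_ne_zero_of_mem_setAO hA hv0.ne' hw0.ne'
    (hi.trans hi'.symm) (hj.trans hj'.symm) (by omega) with h | h
  · have := hgrow₁ h; omega
  · have := hgrow₂ h; omega

lemma prodSeq_succ_eq_mul (M : ℕ → Matrix (Fin n) (Fin n) ℝ) (b : ℕ) :
    prodSeq M (b + 1) = prodSeq (fun κ => M (κ + 1)) b * M 1 := by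
  induction b with
  | zero => simp [prodSeq]
  | succ b ih => rw [prodSeq, ih, ← Matrix.mul_assoc]; rfl

lemma prodSeq_mem_subStochastic {M : ℕ → Matrix (Fin n) (Fin n) ℝ} {b : ℕ}
    (hM : ∀ κ, 1 ≤ κ → κ ≤ b → M κ ∈ subStochastic ℝ (Fin n)) :
    prodSeq M b ∈ subStochastic ℝ (Fin n) := by
  induction b with
  | zero => exact Submonoid.one_mem _
  | succ b ih =>
    exact Submonoid.mul_mem _ (hM _ (by omega) le_rfl) (ih fun κ h1 h2 => hM κ h1 (by omega))

theorem exists_isBlockAbove_rows_prodSeq (hv0 : 0 < θv) (hv1 : θv < 1) (hw0 : 0 < θw)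
    (hw1 : θw < 1) (ι : ℕ) (hι : ι + 2 ≤ n) (M : ℕ → Matrix (Fin n) (Fin n) ℝ)
    (hM : ∀ κ, 1 ≤ κ → κ ≤ ι → M κ ∈ setAO n θv θw) :
    ∃ k₁ k₂ : ℕ, 1 ≤ k₁ ∧ k₁ ≤ ι + 1 ∧ 1 ≤ k₂ ∧ k₂ ≤ ι + 1 ∧ ι + 2 ≤ k₁ + k₂ ∧
      IsBlockAbove {c : Fin n | (c : ℕ) < k₁} (thetaLow θv θw ^ ι)
        (prodSeq M ι ⟨0, by omega⟩) ∧
      IsBlockAbove {c : Fin n | n - k₂ ≤ (c : ℕ)} (thetaLow θv θw ^ ι)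
        (prodSeq M ι ⟨n - 1, by omega⟩) := by
  induction ι generalizing M with
  | zero =>
    refine ⟨1, 1, le_rfl, le_rfl, le_rfl, le_rfl, le_rfl, ?_, ?_⟩ <;> rw [pow_zero] <;>
      refine isBlockAbove_one_apply _ fun c => ?_ <;> simp only [Set.mem_ofPred_eq, Fin.ext_iff] <;>
      omega
  | succ ι ih =>
    obtain ⟨k₁, k₂, hk₁, hk₁ι, hk₂, hk₂ι, hk, hu, hv⟩ :=
      ih (by omega) _ fun κ h1 h2 => hM (κ + 1) (by omega) (by omega)
    have hP := prodSeq_mem_subStochastic (M := fun κ => M (κ + 1)) (b := ι) fun κ h1 h2 =>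
      mem_subStochastic_of_mem_setAO (hM (κ + 1) (by omega) (by omega)) hv0.le hv1.le hw0.le hw1.le
    obtain ⟨k₁', k₂', h₁, h₁', h₂, h₂', hgrow, hu', hv'⟩ :=
      exists_isBlockAbove_vecMul_of_mem_setAO (hM 1 le_rfl (by omega)) hv0 hv1 hw0 hw1 hk₁
        (by omega) hk₂ (by omega) (hP.1 _) (hP.1 _) hu hv
    refine ⟨k₁', k₂', by omega, by omega, by omega, by omega, by omega, ?_, ?_⟩ <;>
      rwa [prodSeq_succ_eq_mul, pow_succ, mul_apply_eq_vecMul]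

end Products

lemma matHb_mul_apply_zero {n : ℕ} (hn : 0 < n) (P : Matrix (Fin n) (Fin n) ℝ) :
    (matHb n * P) 0 = P ⟨0, hn⟩ := by
  have : matHb n 0 = Pi.single ⟨0, hn⟩ 1 := by
    ext j
    simp only [matHb, of_apply, Pi.single_apply, Fin.ext_iff]
    split_ifs <;> first | rfl | omega
  rw [mul_apply_eq_vecMul, this, single_vecMul, one_smul, row]

lemma matHb_mul_apply_one {n : ℕ} (hn : 0 < n) (P : Matrix (Fin n) (Fin n) ℝ) :
    (matHb n * P) 1 = P ⟨n - 1, by omega⟩ := by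
  have : matHb n 1 = Pi.single ⟨n - 1, by omega⟩ 1 := by
    ext j
    simp only [matHb, of_apply, Pi.single_apply, Fin.ext_iff]
    split_ifs <;> first | rfl | omega
  rw [mul_apply_eq_vecMul, this, single_vecMul, one_smul, row]

theorem stmt19_general
    (n : ℕ)
    (Δt Δx vm w : ℝ) (hΔt : 0 < Δt) (hΔx : 0 < Δx) (hvm : 0 < vm) (hw : 0 < w)
    (hv1 : vm * Δt / Δx < 1) (hw1 : w * Δt / Δx < 1)
    (ι : ℕ) (hι1 : 1 ≤ ι) (hι2 : ι ≤ n - 2)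
    (M : ℕ → Matrix (Fin n) (Fin n) ℝ)
    (hM : ∀ κ, 1 ≤ κ → κ ≤ ι → M κ ∈ setAO n (vm * Δt / Δx) (w * Δt / Δx)) :
    ∃ ι₁ ι₂ : ℕ, 1 ≤ ι₁ ∧ ι₁ ≤ ι + 1 ∧ 1 ≤ ι₂ ∧ ι₂ ≤ ι + 1 ∧ ι + 2 ≤ ι₁ + ι₂ ∧
      (∀ c : Fin n, ι₁ ≤ (c : ℕ) → (matHb n * prodSeq M ι) 0 c = 0) ∧
      (∀ c : Fin n, (c : ℕ) < ι₁ →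
        (min (min (vm * Δt / Δx) (1 - vm * Δt / Δx))
            (min (w * Δt / Δx) (1 - w * Δt / Δx))) ^ ι ≤
          (matHb n * prodSeq M ι) 0 c ∧ (matHb n * prodSeq M ι) 0 c ≤ 1) ∧
      (∀ c : Fin n, (c : ℕ) < n - ι₂ → (matHb n * prodSeq M ι) 1 c = 0) ∧
      (∀ c : Fin n, n - ι₂ ≤ (c : ℕ) →
        (min (min (vm * Δt / Δx) (1 - vm * Δt / Δx))
            (min (w * Δt / Δx) (1 - w * Δt / Δx))) ^ ι ≤
          (matHb n * prodSeq M ι) 1 c ∧ (matHb n * prodSeq M ι) 1 c ≤ 1) := by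
  have hv0 : 0 < vm * Δt / Δx := by positivity
  have hw0 : 0 < w * Δt / Δx := by positivity
  obtain ⟨k₁, k₂, hk₁, hk₁ι, hk₂, hk₂ι, hk, hu, hv⟩ :=
    exists_isBlockAbove_rows_prodSeq hv0 hv1 hw0 hw1 ι (by omega) M hM
  have hP := prodSeq_mem_subStochastic fun κ h1 h2 =>
    mem_subStochastic_of_mem_setAO (hM κ h1 h2) hv0.le hv1.le hw0.le hw1.le
  rw [matHb_mul_apply_zero (by omega), matHb_mul_apply_one (by omega)]
  exact ⟨k₁, k₂, hk₁, hk₁ι, hk₂, hk₂ι, hk, fun c hc => hu.1 c (not_lt.2 hc),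
    fun c hc => ⟨hu.2 c hc, le_one_of_mem_subStochastic hP _ _⟩,
    fun c hc => hv.1 c (not_le.2 hc),
    fun c hc => ⟨hv.2 c hc, le_one_of_mem_subStochastic hP _ _⟩⟩

/-- structure of `H_b · M_ι ⋯ M_1` for products of observable-mode
matrices of length `1 ≤ ι ≤ n−2`: the first row is supported on an initial segment
of at most `ι+1` columns with entries in `[θ̲^ι, 1]`, the second row on a final
segment of at most `ι+1` columns with entries in `[θ̲^ι, 1]`, and the two segment
lengths `ι₁, ι₂` satisfy `ι₁ + ι₂ ≥ ι + 2`. -/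
theorem stmt19
    (n : ℕ) (hn : 3 ≤ n)
    (Δt Δx vm w : ℝ) (hΔt : 0 < Δt) (hΔx : 0 < Δx) (hvm : 0 < vm) (hw : 0 < w)
    (hv1 : vm * Δt / Δx < 1) (hw1 : w * Δt / Δx < 1)
    (ι : ℕ) (hι1 : 1 ≤ ι) (hι2 : ι ≤ n - 2)
    (M : ℕ → Matrix (Fin n) (Fin n) ℝ)
    (hM : ∀ κ, 1 ≤ κ → κ ≤ ι → M κ ∈ setAO n (vm * Δt / Δx) (w * Δt / Δx)) :
    ∃ ι₁ ι₂ : ℕ, 1 ≤ ι₁ ∧ ι₁ ≤ ι + 1 ∧ 1 ≤ ι₂ ∧ ι₂ ≤ ι + 1 ∧ ι + 2 ≤ ι₁ + ι₂ ∧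
      (∀ c : Fin n, ι₁ ≤ (c : ℕ) → (matHb n * prodSeq M ι) 0 c = 0) ∧
      (∀ c : Fin n, (c : ℕ) < ι₁ →
        (min (min (vm * Δt / Δx) (1 - vm * Δt / Δx))
            (min (w * Δt / Δx) (1 - w * Δt / Δx))) ^ ι ≤
          (matHb n * prodSeq M ι) 0 c ∧ (matHb n * prodSeq M ι) 0 c ≤ 1) ∧
      (∀ c : Fin n, (c : ℕ) < n - ι₂ → (matHb n * prodSeq M ι) 1 c = 0) ∧
      (∀ c : Fin n, n - ι₂ ≤ (c : ℕ) →
        (min (min (vm * Δt / Δx) (1 - vm * Δt / Δx))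
            (min (w * Δt / Δx) (1 - w * Δt / Δx))) ^ ι ≤
          (matHb n * prodSeq M ι) 1 c ∧ (matHb n * prodSeq M ι) 1 c ≤ 1) :=
  stmt19_general n Δt Δx vm w hΔt hΔx hvm hw hv1 hw1 ι hι1 hι2 M hM

end
end
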